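/- Let C be the fiber product of 𝐄″^{♥,𝐅} and 𝐄̂′^{𝐅̂} over 𝐄̂″^{𝐅̂} (with respect to μ″_ν and p̂₂). Then there exist maps p′ : 𝐄′^{♥,𝐅} → C, p̂ : C → 𝐄″^{♥,𝐅} and μ̂ : C → 𝐄̂′^{𝐅̂} through which the middle square of the extended induction diagram factors commutatively (p̂ ∘ p′ = p₂^♥ and μ̂ ∘ p′ = μ′_ν), and the map p′ is a principal G_𝐓^{[𝐢₋],𝐅} × G_𝐖^{[𝐢₋],𝐅}-bundle; in particular p′ is surjective and each of its fibers is a free orbit of G_𝐓^{[𝐢₋],𝐅} × G_𝐖^{[𝐢₋],𝐅}. -/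

import Mathlib

noncomputable section

/-- `x` and `y` lie in one orbit of the permutation `a`. -/
def inOrbit {α : Type*} (a : Equiv.Perm α) (x y : α) : Prop := ∃ n : ℤ, (a ^ n) x = y

lemma inOrbit_refl {α : Type*} (a : Equiv.Perm α) (x : α) : inOrbit a x x :=
  ⟨0, by simp⟩

lemma inOrbit_apply {α : Type*} (a : Equiv.Perm α) (x y : α) :
    inOrbit a x (a y) ↔ inOrbit a x y := by
  constructor
  · rintro ⟨n, h⟩
    refine ⟨-1 + n, ?_⟩
    have hh : (a ^ (-1 + n : ℤ)) x = a⁻¹ ((a ^ n) x) := by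
      rw [zpow_add, Equiv.Perm.mul_apply, zpow_neg_one]
    rw [hh, h]; simp only [Equiv.Perm.coe_inv, Equiv.symm_apply_apply]
  · rintro ⟨n, h⟩
    refine ⟨1 + n, ?_⟩
    rw [zpow_add, Equiv.Perm.mul_apply, h, zpow_one]

lemma inOrbit_symm {α : Type*} {a : Equiv.Perm α} {x y : α} (h : inOrbit a x y) :
    inOrbit a y x := by
  obtain ⟨n, h⟩ := h
  refine ⟨-n, ?_⟩
  rw [← h, ← Equiv.Perm.mul_apply, ← zpow_add, neg_add_cancel, zpow_zero,
    Equiv.Perm.one_apply]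

lemma inOrbit_trans {α : Type*} {a : Equiv.Perm α} {x y z : α}
    (h1 : inOrbit a x y) (h2 : inOrbit a y z) : inOrbit a x z := by
  obtain ⟨n, h1⟩ := h1; obtain ⟨m, h2⟩ := h2
  exact ⟨m + n, by rw [zpow_add, Equiv.Perm.mul_apply, h1, h2]⟩

/-- A finite oriented graph (loops allowed) together with a pair of bijections commuting
with the source and target maps (an automorphism of the oriented graph). -/
structure PreGraph where
  V : Type
  E : Type
  [fv : Fintype V]
  [fe : Fintype E]
  nonemptyV : Nonempty V
  src : E → V
  tgt : E → V
  aV : Equiv.Perm V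
  aE : Equiv.Perm E
  comm_src : ∀ h, src (aE h) = aV (src h)
  comm_tgt : ∀ h, tgt (aE h) = aV (tgt h)

attribute [instance] PreGraph.fv PreGraph.fe

namespace PreGraph

variable (Q : PreGraph)

lemma comm_src_inv (h : Q.E) : Q.src (Q.aE⁻¹ h) = Q.aV⁻¹ (Q.src h) := by
  have := Q.comm_src (Q.aE⁻¹ h)
  simp only [Equiv.Perm.coe_inv, Equiv.apply_symm_apply] at this
  rw [this]; simp only [Equiv.Perm.coe_inv, Equiv.symm_apply_apply]

lemma comm_tgt_inv (h : Q.E) : Q.tgt (Q.aE⁻¹ h) = Q.aV⁻¹ (Q.tgt h) := by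
  have := Q.comm_tgt (Q.aE⁻¹ h)
  simp only [Equiv.Perm.coe_inv, Equiv.apply_symm_apply] at this
  rw [this]; simp only [Equiv.Perm.coe_inv, Equiv.symm_apply_apply]

lemma comm_src_zpow (n : ℤ) (h : Q.E) :
    Q.src ((Q.aE ^ n) h) = (Q.aV ^ n) (Q.src h) := by
  induction n using Int.induction_on generalizing h with
  | zero => simp
  | succ k ih =>
      rw [zpow_add_one, Equiv.Perm.mul_apply, ih, Q.comm_src, ← Equiv.Perm.mul_apply,
        ← zpow_add_one]
  | pred k ih =>
      rw [zpow_sub_one, Equiv.Perm.mul_apply, ih, Q.comm_src_inv, ← Equiv.Perm.mul_apply,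
        ← zpow_sub_one]

lemma comm_tgt_zpow (n : ℤ) (h : Q.E) :
    Q.tgt ((Q.aE ^ n) h) = (Q.aV ^ n) (Q.tgt h) := by
  induction n using Int.induction_on generalizing h with
  | zero => simp
  | succ k ih =>
      rw [zpow_add_one, Equiv.Perm.mul_apply, ih, Q.comm_tgt, ← Equiv.Perm.mul_apply,
        ← zpow_add_one]
  | pred k ih =>
      rw [zpow_sub_one, Equiv.Perm.mul_apply, ih, Q.comm_tgt_inv, ← Equiv.Perm.mul_apply,
        ← zpow_sub_one]

end PreGraph
/-- The contraction setup: a finite oriented graph with admissible automorphism `a`,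
two distinct `a`-orbits `[i₊] ≠ [i₋]` of equal size, with no loops at their vertices, such
that no two edges with endpoints in `[i₊] ∪ [i₋]` and distinct endpoints share exactly one
endpoint, together with a fixed edge `e₀` from `[i₊]` to `[i₋]`. -/
structure CSetup extends PreGraph where
  admissible : ∀ h, src h ≠ tgt h → ¬ inOrbit aV (src h) (tgt h)
  ip : V
  im : V
  orb_ne : ¬ inOrbit aV ip im
  orb_card : Nat.card {v : V // inOrbit aV ip v} = Nat.card {v : V // inOrbit aV im v}
  no_loops : ∀ h, src h = tgt h → ¬ (inOrbit aV ip (src h) ∨ inOrbit aV im (src h))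
  no_share : ∀ h l, src h ≠ tgt h →
      (inOrbit aV ip (src h) ∨ inOrbit aV im (src h)) →
      (inOrbit aV ip (tgt h) ∨ inOrbit aV im (tgt h)) →
      (inOrbit aV ip (src l) ∨ inOrbit aV im (src l)) →
      (inOrbit aV ip (tgt l) ∨ inOrbit aV im (tgt l)) →
      (src l = src h ∨ src l = tgt h) →
      (tgt l = src h ∨ tgt l = tgt h)
  e0 : E
  e0_src : inOrbit aV ip (src e0)
  e0_tgt : inOrbit aV im (tgt e0)

namespace CSetup

variable (C : CSetup)

lemma ip_not_im {v : C.V} (h : inOrbit C.aV C.ip v) : ¬ inOrbit C.aV C.im v :=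
  fun h' => C.orb_ne (inOrbit_trans h (inOrbit_symm h'))

lemma im_not_ip {v : C.V} (h : inOrbit C.aV C.im v) : ¬ inOrbit C.aV C.ip v :=
  fun h' => C.orb_ne (inOrbit_trans h' (inOrbit_symm h))

/-- `h_k` ranges over the `a`-orbit of the fixed edge `e₀`. -/
def isHK (k : C.E) : Prop := inOrbit C.aE C.e0 k

lemma hk_src {k : C.E} (h : C.isHK k) : inOrbit C.aV C.ip (C.src k) := by
  obtain ⟨n, rfl⟩ := h
  rw [C.comm_src_zpow]
  obtain ⟨m, hm⟩ := C.e0_src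
  exact ⟨n + m, by rw [zpow_add, Equiv.Perm.mul_apply, hm]⟩

lemma hk_tgt {k : C.E} (h : C.isHK k) : inOrbit C.aV C.im (C.tgt k) := by
  obtain ⟨n, rfl⟩ := h
  rw [C.comm_tgt_zpow]
  obtain ⟨m, hm⟩ := C.e0_tgt
  exact ⟨n + m, by rw [zpow_add, Equiv.Perm.mul_apply, hm]⟩

/-- An edge whose source lies in `[i₋]` has its target outside `[i₋]`. -/
lemma tgt_escapes {l : C.E} (h : inOrbit C.aV C.im (C.src l)) :
    ¬ inOrbit C.aV C.im (C.tgt l) := by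
  intro h'
  by_cases hst : C.src l = C.tgt l
  · exact C.no_loops l hst (Or.inr h)
  · exact C.admissible l hst (inOrbit_trans (inOrbit_symm h) h')

/-- An edge whose target lies in `[i₋]` has its source outside `[i₋]`, unless it is a loop;
but loops at `[i₋]` are excluded, so the source is outside `[i₋]`. -/
lemma src_escapes {l : C.E} (h : inOrbit C.aV C.im (C.tgt l)) :
    ¬ inOrbit C.aV C.im (C.src l) := by
  intro h'
  by_cases hst : C.src l = C.tgt l
  · exact C.no_loops l hst (Or.inr h')
  · exact C.admissible l hst (inOrbit_trans (inOrbit_symm h') h)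

/-- The predicate carving the contracted edge set `Ω̂` out of the ambient sum type:
old edges not incident to `[i₋]`, composites `l₁h_k` (with `l₁′ = h_k″`), and composites
`h̄_k l₂` (with `l₂″ = h_k″`, `l₂ ≠ h_k`). -/
def PHat : C.E ⊕ (C.E × C.E) ⊕ (C.E × C.E) → Prop
  | Sum.inl h => ¬ inOrbit C.aV C.im (C.src h) ∧ ¬ inOrbit C.aV C.im (C.tgt h)
  | Sum.inr (Sum.inl (k, l)) => C.isHK k ∧ C.src l = C.tgt k
  | Sum.inr (Sum.inr (k, l)) => C.isHK k ∧ C.tgt l = C.tgt k ∧ l ≠ k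

/-- The vertex set `𝐈̂ = 𝐈 − [i₋]` of the contracted graph. -/
def VHat : Type := {v : C.V // ¬ inOrbit C.aV C.im v}

/-- The edge set `Ω̂` of the contracted graph. -/
def EHat : Type := {r : C.E ⊕ (C.E × C.E) ⊕ (C.E × C.E) // C.PHat r}

instance : Fintype C.VHat := by
  classical exact (Subtype.fintype _)

instance : Fintype C.EHat := by
  classical exact (Subtype.fintype _)

instance : Nonempty C.VHat := ⟨⟨C.ip, C.ip_not_im (inOrbit_refl _ _)⟩⟩

/-- The source map of the contracted graph. -/
def srcHat : C.EHat → C.VHat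
  | ⟨Sum.inl h, pf⟩ => ⟨C.src h, pf.1⟩
  | ⟨Sum.inr (Sum.inl (k, _)), pf⟩ => ⟨C.src k, C.ip_not_im (C.hk_src pf.1)⟩
  | ⟨Sum.inr (Sum.inr (k, l)), pf⟩ =>
      ⟨C.src l, C.src_escapes (pf.2.1 ▸ C.hk_tgt pf.1)⟩

/-- The target map of the contracted graph. -/
def tgtHat : C.EHat → C.VHat
  | ⟨Sum.inl h, pf⟩ => ⟨C.tgt h, pf.2⟩
  | ⟨Sum.inr (Sum.inl (k, l)), pf⟩ =>
      ⟨C.tgt l, C.tgt_escapes (pf.2 ▸ C.hk_tgt pf.1)⟩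
  | ⟨Sum.inr (Sum.inr (k, _)), pf⟩ => ⟨C.src k, C.ip_not_im (C.hk_src pf.1)⟩

/-- The vertex part of the induced automorphism `â`. -/
def aVHat : Equiv.Perm C.VHat :=
  Equiv.Perm.subtypePerm C.aV (by
    intro v
    exact not_congr (inOrbit_apply C.aV C.im v))

/-- The induced automorphism on the ambient contracted edge type. -/
def aERaw : Equiv.Perm (C.E ⊕ (C.E × C.E) ⊕ (C.E × C.E)) :=
  Equiv.sumCongr C.aE (Equiv.sumCongr (Equiv.prodCongr C.aE C.aE) (Equiv.prodCongr C.aE C.aE))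

lemma pHat_aERaw (r : C.E ⊕ (C.E × C.E) ⊕ (C.E × C.E)) :
    C.PHat r ↔ C.PHat (C.aERaw r) := by
  rcases r with h | ⟨k, l⟩ | ⟨k, l⟩
  · simp only [aERaw, Equiv.sumCongr_apply, Sum.map_inl, PHat, C.comm_src, C.comm_tgt,
      inOrbit_apply]
  · simp only [aERaw, Equiv.sumCongr_apply, Sum.map_inr, Sum.map_inl, Prod.map_apply,
      Equiv.prodCongr_apply, PHat, isHK, inOrbit, C.comm_src, C.comm_tgt]
    constructor
    · rintro ⟨⟨n, hn⟩, h2⟩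
      exact ⟨⟨1 + n, by rw [zpow_add, Equiv.Perm.mul_apply, hn, zpow_one]⟩, by rw [h2]⟩
    · rintro ⟨⟨n, hn⟩, h2⟩
      refine ⟨⟨-1 + n, ?_⟩, C.aV.injective h2⟩
      have hh : (C.aE ^ (-1 + n : ℤ)) C.e0 = C.aE⁻¹ ((C.aE ^ n) C.e0) := by
        rw [zpow_add, Equiv.Perm.mul_apply, zpow_neg_one]
      rw [hh, hn]; simp only [Equiv.Perm.coe_inv, Equiv.symm_apply_apply]
  · simp only [aERaw, Equiv.sumCongr_apply, Sum.map_inr, Prod.map_apply,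
      Equiv.prodCongr_apply, PHat, isHK, inOrbit, C.comm_tgt]
    constructor
    · rintro ⟨⟨n, hn⟩, h2, h3⟩
      refine ⟨⟨1 + n, by rw [zpow_add, Equiv.Perm.mul_apply, hn, zpow_one]⟩, by rw [h2],
        fun hc => h3 (C.aE.injective hc)⟩
    · rintro ⟨⟨n, hn⟩, h2, h3⟩
      refine ⟨⟨-1 + n, ?_⟩, C.aV.injective h2, fun hc => h3 (by rw [hc])⟩
      have hh : (C.aE ^ (-1 + n : ℤ)) C.e0 = C.aE⁻¹ ((C.aE ^ n) C.e0) := by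
        rw [zpow_add, Equiv.Perm.mul_apply, zpow_neg_one]
      rw [hh, hn]; simp only [Equiv.Perm.coe_inv, Equiv.symm_apply_apply]

/-- The edge part of the induced automorphism `â`. -/
def aEHat : Equiv.Perm C.EHat :=
  Equiv.Perm.subtypePerm C.aERaw (fun r => (C.pHat_aERaw r).symm)

lemma srcHat_aEHat (r : C.EHat) : C.srcHat (C.aEHat r) = C.aVHat (C.srcHat r) := by
  rcases r with ⟨h | ⟨k, l⟩ | ⟨k, l⟩, pf⟩
  · exact Subtype.ext (C.comm_src h)
  · exact Subtype.ext (C.comm_src k)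
  · exact Subtype.ext (C.comm_src l)

lemma tgtHat_aEHat (r : C.EHat) : C.tgtHat (C.aEHat r) = C.aVHat (C.tgtHat r) := by
  rcases r with ⟨h | ⟨k, l⟩ | ⟨k, l⟩, pf⟩
  · exact Subtype.ext (C.comm_tgt h)
  · exact Subtype.ext (C.comm_tgt l)
  · exact Subtype.ext (C.comm_src k)

/-- The contracted graph `(𝐈̂, Ω̂)` with its induced automorphism `â`. -/
def GHat : PreGraph where
  V := C.VHat
  E := C.EHat
  nonemptyV := inferInstance
  src := C.srcHat
  tgt := C.tgtHat
  aV := C.aVHat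
  aE := C.aEHat
  comm_src := C.srcHat_aEHat
  comm_tgt := C.tgtHat_aEHat

end CSetup

/-- `K`, an algebraic closure of `𝔽_p`. -/
abbrev Kp (p : ℕ) [Fact p.Prime] : Type := AlgebraicClosure (ZMod p)

/-- An `a`-invariant dimension vector, i.e. an element of `ℕ[I]`, `I = 𝐈/a`. -/
structure DimVec (Q : PreGraph) where
  d : Q.V → ℕ
  inv : ∀ v, d (Q.aV v) = d v

namespace DimVec

/-- The sum of two dimension vectors. -/
def add {Q : PreGraph} (A B : DimVec Q) : DimVec Q :=
  ⟨fun v => A.d v + B.d v, fun v =>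
    show A.d (Q.aV v) + B.d (Q.aV v) = A.d v + B.d v by rw [A.inv, B.inv]⟩

lemma inv_zpow {Q : PreGraph} (D : DimVec Q) (n : ℤ) (v : Q.V) :
    D.d ((Q.aV ^ n) v) = D.d v := by
  induction n using Int.induction_on generalizing v with
  | zero => simp
  | succ k ih => rw [zpow_add_one, Equiv.Perm.mul_apply, ih, D.inv]
  | pred k ih =>
      rw [zpow_sub_one, Equiv.Perm.mul_apply, ih]
      have := D.inv (Q.aV⁻¹ v)
      simp only [Equiv.Perm.coe_inv, Equiv.apply_symm_apply] at this
      exact this.symm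

end DimVec

section RepTheory

variable (p e : ℕ) [Fact p.Prime] (Q : PreGraph) (D : DimVec Q)

/-- The representation space `E_𝐕 = ⊕_{h ∈ Ω} Hom(𝐕_{h′}, 𝐕_{h″})`, in the fixed bases. -/
def RepSp : Type :=
  ∀ h : Q.E, Matrix (Fin (D.d (Q.tgt h))) (Fin (D.d (Q.src h))) (Kp p)

/-- The group `G_𝐕 = ∏_{𝐢} GL(𝐕_𝐢)`. -/
def GGr : Type := ∀ v : Q.V, GL (Fin (D.d v)) (Kp p)

instance : Group (GGr p Q D) := by unfold GGr; infer_instance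

/-- The conjugation action `(g·x)_h = g_{h″} x_h g_{h′}^{-1}` of `G_𝐕` on `E_𝐕`. -/
def actE (g : GGr p Q D) (x : RepSp p Q D) : RepSp p Q D :=
  fun h => (g (Q.tgt h)).val * x h * ((g (Q.src h))⁻¹).val

/-- The twisted Frobenius `𝐅 = Fr ∘ a` on the representation space: `(𝐅x)_h` is obtained
from `x_{a(h)}` by raising all matrix entries to the `q = pᵉ`-th power (transported along
the identifications `𝐕_{a(𝐢)} = 𝐕_𝐢` coming from the compatible `a`-action in the fixed
bases). -/
def TwFE (x : RepSp p Q D) : RepSp p Q D := fun h =>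
  fun i j =>
    (x (Q.aE h)
      (finCongr (show D.d (Q.tgt h) = D.d (Q.tgt (Q.aE h)) by rw [Q.comm_tgt, D.inv]) i)
      (finCongr (show D.d (Q.src h) = D.d (Q.src (Q.aE h)) by rw [Q.comm_src, D.inv]) j))
    ^ (p ^ e)

/-- The `q = pᵉ`-power Frobenius of `K`. -/
def frobHom : Kp p →+* Kp p := iterateFrobenius (Kp p) p e

/-- The twisted Frobenius on `G_𝐕`. -/
def TwFG (g : GGr p Q D) : GGr p Q D := fun v =>
  Units.mapEquiv
    (Matrix.reindexAlgEquiv (Kp p) (Kp p)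
      (finCongr (show D.d (Q.aV v) = D.d v from D.inv v))).toMulEquiv
    (Units.map (RingHom.toMonoidHom (frobHom p e).mapMatrix) (g (Q.aV v)))

end RepTheory

section Blocks

variable (p e : ℕ) [Fact p.Prime] (Q : PreGraph) (Dt Dw : DimVec Q)

/-- `S_𝐖 ⊆ E_𝐕`: the representations leaving the graded subspace `𝐖` (spanned by the last
`ω` basis vectors in each graded piece, `𝐕 = 𝐓 ⊕ 𝐖`) invariant, i.e. those whose
`(𝐓-row, 𝐖-column)` block vanishes. -/
def SWSet : Set (RepSp p Q (Dt.add Dw)) :=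
  {x | ∀ (h : Q.E) (i : Fin (Dt.d (Q.tgt h))) (j : Fin (Dw.d (Q.src h))),
    x h (Fin.castAdd _ i) (Fin.natAdd _ j) = 0}

/-- `x ↦ x^𝐓`, the induced representation on `𝐓 ≅ 𝐕/𝐖` (the upper-left block). -/
def blockT (x : RepSp p Q (Dt.add Dw)) : RepSp p Q Dt :=
  fun h i j => x h (Fin.castAdd _ i) (Fin.castAdd _ j)

/-- `x ↦ x^𝐖`, the restricted representation on `𝐖` (the lower-right block). -/
def blockW (x : RepSp p Q (Dt.add Dw)) : RepSp p Q Dw :=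
  fun h i j => x h (Fin.natAdd _ i) (Fin.natAdd _ j)

end Blocks

section Contraction

variable (p e : ℕ) [Fact p.Prime] (C : CSetup) (D : DimVec C.toPreGraph)

/-- The heart locus `E_𝐕^♥ = {x : x_{h_k} is an isomorphism for all k}`. -/
def heartSet : Set (RepSp p C.toPreGraph D) :=
  {x | ∀ k : C.E, C.isHK k → Function.Bijective (Matrix.mulVecLin (x k))}

/-- A dimension vector is balanced when `ν_{[i₊]} = ν_{[i₋]}`, i.e. it lies in `ℕ[Î]`. -/
def DimVec.bal : Prop := D.d C.ip = D.d C.im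

/-- The dimension vector induced on the contracted graph. -/
def DimVec.hat : DimVec C.GHat :=
  ⟨fun v => D.d v.1, fun v => D.inv v.1⟩

variable {p C D}

/-- Multiplication of rectangular matrices after recasting the inner index (used for the
composite edges of the contracted graph; the sizes agree in all relevant cases). -/
def castMul {a b c d : ℕ} (A : Matrix (Fin a) (Fin b) (Kp p)) (B : Matrix (Fin c) (Fin d) (Kp p)) :
    Matrix (Fin a) (Fin d) (Kp p) :=
  if h : b = c then A * B.submatrix (⇑(finCongr h)) id else 0

/-- The inverse of a rectangular matrix of square shape (used for `x_{h_k}^{-1}`; the two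
sizes agree in all relevant cases). -/
def invSq {a b : ℕ} (M : Matrix (Fin a) (Fin b) (Kp p)) : Matrix (Fin b) (Fin a) (Kp p) :=
  if h : a = b then ((M.submatrix (⇑(finCongr h.symm)) id)⁻¹).submatrix id (⇑(finCongr h))
  else 0

variable (p C D)

/-- The contraction map `μ_ν : E_𝐕 → E_𝐕̂`, `x ↦ x̂`:  `x̂_h = x_h` for old edges,
`x̂_{l₁h_k} = x_{l₁} x_{h_k}` and `x̂_{h̄_k l₂} = x_{h_k}^{-1} x_{l₂}` for composite edges. -/
def muE (x : RepSp p C.toPreGraph D) : RepSp p C.GHat (D.hat C)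
  | ⟨Sum.inl h, _⟩ => x h
  | ⟨Sum.inr (Sum.inl (k, l)), _⟩ => castMul (x l) (x k)
  | ⟨Sum.inr (Sum.inr (k, l)), _⟩ => castMul (invSq (x k)) (x l)

end Contraction

section Hall

open scoped Classical

variable (p e : ℕ) [Fact p.Prime]

/-- The field `ℚ(q^{1/2})`, realized as the subfield of `ℝ` generated by `√q`, `q = pᵉ`. -/
def FF : Subfield ℝ := Subfield.closure {Real.sqrt (p ^ e)}

/-- The element `q^{1/2} ∈ ℚ(q^{1/2})`. -/
def sqq : FF p e := ⟨Real.sqrt (p ^ e), Subfield.subset_closure rfl⟩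

variable (Q : PreGraph) (D : DimVec Q)

/-- The space `H_{ν,Ω}` of `G_𝐕^𝐅`-invariant `ℚ(q^{1/2})`-valued functions on `E_𝐕^𝐅`
(realized as functions on `E_𝐕` vanishing off the twisted Frobenius fixed points and
invariant under the fixed subgroup). -/
def HallSet : Set (RepSp p Q D → FF p e) :=
  {f | (∀ x, TwFE p e Q D x ≠ x → f x = 0) ∧
       (∀ g x, TwFG p e Q D g = g → f (actE p Q D g x) = f x)}

/-- The number of elements of `G_𝐕^𝐅`. -/
def GFcard : ℕ := Nat.card {g : GGr p Q D // TwFG p e Q D g = g}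

variable (Dt Dw : DimVec Q)

/-- The weight `m_Ω(τ,ω) = Σ_{𝐢∈𝐈} τ_𝐢 ω_𝐢 + Σ_{h∈Ω} τ_{h′} ω_{h″}`. -/
def mWt : ℤ :=
  (∑ᶠ v : Q.V, (Dt.d v * Dw.d v : ℤ)) + ∑ᶠ h : Q.E, (Dt.d (Q.src h) * Dw.d (Q.tgt h) : ℤ)

/-- Membership in the unipotent radical `U` of the stabilizer `Q` of `𝐖`, intersected with
the twisted Frobenius fixed subgroup: block shape `[[1,0],[*,1]]`. -/
def uMem (u : GGr p Q (Dt.add Dw)) : Prop :=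
  TwFG p e Q (Dt.add Dw) u = u ∧
  ∀ v : Q.V,
    (∀ i j : Fin (Dt.d v), (u v).val (Fin.castAdd _ i) (Fin.castAdd _ j)
      = if i = j then 1 else 0) ∧
    (∀ (i : Fin (Dt.d v)) (j : Fin (Dw.d v)),
      (u v).val (Fin.castAdd _ i) (Fin.natAdd _ j) = 0) ∧
    (∀ i j : Fin (Dw.d v), (u v).val (Fin.natAdd _ i) (Fin.natAdd _ j)
      = if i = j then 1 else 0)

/-- Membership in the parabolic stabilizer `Q` of `𝐖` (block lower triangular), intersected
with the twisted Frobenius fixed subgroup. -/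
def qMem (b : GGr p Q (Dt.add Dw)) : Prop :=
  TwFG p e Q (Dt.add Dw) b = b ∧
  ∀ (v : Q.V) (i : Fin (Dt.d v)) (j : Fin (Dw.d v)),
    (b v).val (Fin.castAdd _ i) (Fin.natAdd _ j) = 0

/-- The pairs `(g, x) ∈ G_𝐕^𝐅 × S_𝐖^𝐅` with `x` in the prescribed locus
(`locus = E_𝐕` for the plain induction diagram, `locus = E_𝐕^♥` for its ♥-version). -/
def goodPair (locus : Set (RepSp p Q (Dt.add Dw))) (c : GGr p Q (Dt.add Dw) × RepSp p Q (Dt.add Dw)) : Prop :=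
  TwFG p e Q (Dt.add Dw) c.1 = c.1 ∧ TwFE p e Q (Dt.add Dw) c.2 = c.2 ∧
    c.2 ∈ SWSet p Q Dt Dw ∧ c.2 ∈ locus

/-- The relation whose classes are the `U^𝐅`-orbits on `G_𝐕^𝐅 × S_𝐖^𝐅`
(`b·(g,x) = (g b^{-1}, b·x)`). -/
def relU (locus : Set (RepSp p Q (Dt.add Dw)))
    (c d : GGr p Q (Dt.add Dw) × RepSp p Q (Dt.add Dw)) : Prop :=
  goodPair p e Q Dt Dw locus c ∧
    ∃ u, uMem p e Q Dt Dw u ∧ d.1 = c.1 * u⁻¹ ∧ d.2 = actE p Q (Dt.add Dw) u c.2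

/-- The relation whose classes are the `Q^𝐅`-orbits on `G_𝐕^𝐅 × S_𝐖^𝐅`. -/
def relQ (locus : Set (RepSp p Q (Dt.add Dw)))
    (c d : GGr p Q (Dt.add Dw) × RepSp p Q (Dt.add Dw)) : Prop :=
  goodPair p e Q Dt Dw locus c ∧
    ∃ b, qMem p e Q Dt Dw b ∧ d.1 = c.1 * b⁻¹ ∧ d.2 = actE p Q (Dt.add Dw) b c.2

/-- `𝐄′ = (G_𝐕 × S_𝐖)/U` on twisted Frobenius fixed points. -/
def Eprime (locus : Set (RepSp p Q (Dt.add Dw))) : Type :=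
  Quot (relU p e Q Dt Dw locus)

/-- `𝐄″ = (G_𝐕 × S_𝐖)/Q` on twisted Frobenius fixed points. -/
def Edouble (locus : Set (RepSp p Q (Dt.add Dw))) : Type :=
  Quot (relQ p e Q Dt Dw locus)

variable {locus : Set (RepSp p Q (Dt.add Dw))}

/-- A class represented by a pair in `G_𝐕^𝐅 × S_𝐖^𝐅` (with `x` in the locus). -/
def goodClU (c : Eprime p e Q Dt Dw locus) : Prop :=
  ∃ a, Quot.mk _ a = c ∧ goodPair p e Q Dt Dw locus a

/-- A class represented by a pair in `G_𝐕^𝐅 × S_𝐖^𝐅` (with `x` in the locus). -/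
def goodClQ (c : Edouble p e Q Dt Dw locus) : Prop :=
  ∃ a, Quot.mk _ a = c ∧ goodPair p e Q Dt Dw locus a

/-- `p₁ : 𝐄′ → E_𝐓 × E_𝐖`, `[g,x]_U ↦ (x^𝐓, x^𝐖)`. -/
def pOne (c : Eprime p e Q Dt Dw locus) : RepSp p Q Dt × RepSp p Q Dw :=
  (blockT p Q Dt Dw (Quot.out c).2, blockW p Q Dt Dw (Quot.out c).2)

/-- `p₂ : 𝐄′ → 𝐄″`, `[g,x]_U ↦ [g,x]_Q`. -/
def pTwo (c : Eprime p e Q Dt Dw locus) : Edouble p e Q Dt Dw locus :=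
  Quot.mk _ (Quot.out c)

/-- `p₃ : 𝐄″ → E_𝐕`, `[g,x]_Q ↦ g·x`. -/
def pThree (c : Edouble p e Q Dt Dw locus) : RepSp p Q (Dt.add Dw) :=
  actE p Q (Dt.add Dw) (Quot.out c).1 (Quot.out c).2

/-- `(p₃)_! (p₂)_! (p₁)^* (f ⊗ g)`. -/
def indRaw (f : RepSp p Q Dt → FF p e) (g : RepSp p Q Dw → FF p e)
    (x : RepSp p Q (Dt.add Dw)) : FF p e :=
  ∑ᶠ (c : Edouble p e Q Dt Dw locus) (_ : pThree p e Q Dt Dw c = x),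
    ∑ᶠ (d : Eprime p e Q Dt Dw locus) (_ : pTwo p e Q Dt Dw d = c),
      f (pOne p e Q Dt Dw d).1 * g (pOne p e Q Dt Dw d).2

variable (locus)

/-- The induction product
`Ind^ν_{τ,ω} = (q^{1/2})^{−m_Ω(τ,ω)} (#(G_𝐓^𝐅 × G_𝐖^𝐅))^{-1} (p₃)_!(p₂)_!(p₁)^*` of the
Hall algebra, built from the induction diagram over the locus. -/
def Ind (f : RepSp p Q Dt → FF p e) (g : RepSp p Q Dw → FF p e) :
    RepSp p Q (Dt.add Dw) → FF p e :=
  fun x => (sqq p e) ^ (-(mWt Q Dt Dw)) *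
    ((GFcard p e Q Dt : FF p e) * (GFcard p e Q Dw : FF p e))⁻¹ *
    indRaw p e Q Dt Dw (locus := locus) f g x

end Hall

section MuJ

open scoped Classical

variable (p e : ℕ) [Fact p.Prime] (C : CSetup) (D : DimVec C.toPreGraph)

/-- `E_𝐕^{♥,𝐅}`: the twisted Frobenius fixed points of the heart locus. -/
def heartF : Set (RepSp p C.toPreGraph D) :=
  {x | TwFE p e C.toPreGraph D x = x ∧ x ∈ heartSet p C D}

/-- `H^♥_{ν,Ω}`: the `G_𝐕^𝐅`-invariant functions on `E_𝐕^{♥,𝐅}` (realized as functions on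
`E_𝐕` vanishing off `E_𝐕^{♥,𝐅}`). -/
def HallSetH : Set (RepSp p C.toPreGraph D → FF p e) :=
  {f | (∀ x, x ∉ heartF p e C D → f x = 0) ∧
       (∀ g x, TwFG p e C.toPreGraph D g = g → f (actE p C.toPreGraph D g x) = f x)}

/-- `H^c_{ν,Ω}`: the invariant functions on `E_𝐕^𝐅` vanishing on `E_𝐕^{♥,𝐅}`, i.e. those
supported on the complement `E_𝐕^{c,𝐅}`. -/
def HallSetC : Set (RepSp p C.toPreGraph D → FF p e) :=
  {f | f ∈ HallSet p e C.toPreGraph D ∧ ∀ x ∈ heartSet p C D, f x = 0}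

/-- `j_!` (extension by zero from `E_𝐕^{♥,𝐅}` to `E_𝐕^𝐅`), and likewise the restriction
map `j^*` of functions (in this ambient model both are given by truncation to the heart
locus). -/
def jOp (f : RepSp p C.toPreGraph D → FF p e) : RepSp p C.toPreGraph D → FF p e :=
  fun x => if x ∈ heartF p e C D then f x else 0

/-- The pullback `μ_ν^*` along the contraction map `μ_ν : E_𝐕^{♥,𝐅} → E_𝐕̂^{𝐅̂}`,
`f ↦ f ∘ μ_ν` (realized ambiently, vanishing off `E_𝐕^{♥,𝐅}`). -/
def muPull (f : RepSp p C.GHat (D.hat C) → FF p e) : RepSp p C.toPreGraph D → FF p e :=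
  fun x => if x ∈ heartF p e C D then f (muE p C D x) else 0

/-- `φ₁(i₋) = #[𝐢₋]`. -/
def phiIm : ℕ := Nat.card {v : C.V // inOrbit C.aV C.im v}

/-- `φ₁(i₊) = #[𝐢₊]`. -/
def phiIp : ℕ := Nat.card {v : C.V // inOrbit C.aV C.ip v}

/-- The twisted pullback `μ_ν^⋆ = (q^{-1/2})^{ν_{i₋}² φ₁(i₋)} μ_ν^*`. -/
def muStar (f : RepSp p C.GHat (D.hat C) → FF p e) : RepSp p C.toPreGraph D → FF p e :=
  fun x => (sqq p e) ^ (-((D.d C.im : ℤ) ^ 2 * (phiIm C : ℤ))) * muPull p e C D f x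

/-- The projection `G_𝐕 → G_𝐕̂` forgetting the `[𝐢₋]`-components. -/
def projG (g : GGr p C.toPreGraph D) : GGr p C.GHat (D.hat C) := fun v => g v.1

/-- The subgroup `G_𝐕^{[𝐢₋]} = ∏_{𝐢 ∈ [𝐢₋]} GL(𝐕_𝐢) ⊆ G_𝐕`, intersected with the twisted
Frobenius fixed subgroup. -/
def GimSet : Set (GGr p C.toPreGraph D) :=
  {g | TwFG p e C.toPreGraph D g = g ∧ ∀ v, ¬ inOrbit C.aV C.im v → g v = 1}

/-- The characteristic function `ζ_𝒪` of the `G_𝐕^𝐅`-orbit of a point `x₀`. -/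
def zetaOrb (x0 : RepSp p C.toPreGraph D) : RepSp p C.toPreGraph D → FF p e :=
  fun y => if ∃ g, TwFG p e C.toPreGraph D g = g ∧ actE p C.toPreGraph D g x0 = y then 1 else 0

/-- The characteristic function of the `G_𝐕̂^{𝐅̂}`-orbit of a point of `E_𝐕̂^{𝐅̂}`. -/
def zetaOrbHat (z0 : RepSp p C.GHat (D.hat C)) : RepSp p C.GHat (D.hat C) → FF p e :=
  fun z => if ∃ g, TwFG p e C.GHat (D.hat C) g = g ∧ actE p C.GHat (D.hat C) g z0 = z
    then 1 else 0

end MuJ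

section Diag

variable {p : ℕ} [Fact p.Prime]

/-- The block diagonal invertible matrix `diag(A, B)`. -/
def glFromBlocks {m n : ℕ} (A : GL (Fin m) (Kp p)) (B : GL (Fin n) (Kp p)) :
    GL (Fin (m + n)) (Kp p) where
  val := (Matrix.fromBlocks A.val 0 0 B.val).submatrix
    (⇑finSumFinEquiv.symm) (⇑finSumFinEquiv.symm)
  inv := (Matrix.fromBlocks (A⁻¹).val 0 0 (B⁻¹).val).submatrix
    (⇑finSumFinEquiv.symm) (⇑finSumFinEquiv.symm)
  val_inv := by
    rw [Matrix.submatrix_mul_equiv _ _ _ finSumFinEquiv.symm _]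
    have h1 : A.val * (A⁻¹).val = 1 := by rw [← Units.val_mul, mul_inv_cancel, Units.val_one]
    have h2 : B.val * (B⁻¹).val = 1 := by rw [← Units.val_mul, mul_inv_cancel, Units.val_one]
    simp only [Matrix.fromBlocks_multiply, Matrix.mul_zero, Matrix.zero_mul, add_zero,
      zero_add]
    rw [h1, h2, Matrix.fromBlocks_one]
    exact Matrix.submatrix_one_equiv finSumFinEquiv.symm
  inv_val := by
    rw [Matrix.submatrix_mul_equiv _ _ _ finSumFinEquiv.symm _]
    have h1 : (A⁻¹).val * A.val = 1 := by rw [← Units.val_mul, inv_mul_cancel, Units.val_one]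
    have h2 : (B⁻¹).val * B.val = 1 := by rw [← Units.val_mul, inv_mul_cancel, Units.val_one]
    simp only [Matrix.fromBlocks_multiply, Matrix.mul_zero, Matrix.zero_mul, add_zero,
      zero_add]
    rw [h1, h2, Matrix.fromBlocks_one]
    exact Matrix.submatrix_one_equiv finSumFinEquiv.symm

/-- The block diagonal embedding `G_𝐓 × G_𝐖 → G_𝐕`. -/
def embedDiag {Q : PreGraph} {Dt Dw : DimVec Q} (s : GGr p Q Dt) (t : GGr p Q Dw) :
    GGr p Q (Dt.add Dw) :=
  fun v => glFromBlocks (s v) (t v)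

end Diag

section QuotMaps

/-- The map on quotients induced by the identity (e.g. the inclusions `𝐄′^{♥,𝐅} → 𝐄′^𝐅`,
`𝐄″^{♥,𝐅} → 𝐄″^𝐅`, and `p₂`-type maps), defined on representatives. -/
def quotMap {α : Sort*} (r s : α → α → Prop) : Quot r → Quot s :=
  fun c => Quot.mk s (Quot.out c)

variable (p e : ℕ) [Fact p.Prime] (C : CSetup) (Dt Dw : DimVec C.toPreGraph)

/-- `(g, x) ↦ (ĝ, μ_ν(x))` on pairs. -/
def pairProjHat
    (c : GGr p C.toPreGraph (Dt.add Dw) × RepSp p C.toPreGraph (Dt.add Dw)) :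
    GGr p C.GHat ((Dt.hat C).add (Dw.hat C)) × RepSp p C.GHat ((Dt.hat C).add (Dw.hat C)) :=
  (projG p C (Dt.add Dw) c.1, muE p C (Dt.add Dw) c.2)

/-- The map `μ′_ν : 𝐄′^{♥,𝐅} → 𝐄̂′^{𝐅̂}` induced by the contraction map and the projection
`G_𝐕 → G_𝐕̂`. -/
def muEprime :
    Eprime p e C.toPreGraph Dt Dw (heartSet p C (Dt.add Dw)) →
      Eprime p e C.GHat (Dt.hat C) (Dw.hat C) Set.univ :=
  fun c => Quot.mk _ (pairProjHat p C Dt Dw (Quot.out c))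

/-- The map `μ″_ν : 𝐄″^{♥,𝐅} → 𝐄̂″^{𝐅̂}`. -/
def muEdouble :
    Edouble p e C.toPreGraph Dt Dw (heartSet p C (Dt.add Dw)) →
      Edouble p e C.GHat (Dt.hat C) (Dw.hat C) Set.univ :=
  fun c => Quot.mk _ (pairProjHat p C Dt Dw (Quot.out c))

end QuotMaps


/-! ### Auxiliary infrastructure -/

section AuxMat

open Matrix

variable {F : Type*} [Field F]

lemma finCongr_comp {a b c : ℕ} (h1 : a = b) (h2 : b = c) :
    ⇑(finCongr h2) ∘ ⇑(finCongr h1) = ⇑(finCongr (h1.trans h2)) :=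
  funext fun i => Fin.ext rfl

lemma finCongr_castAdd {a b a' b' : ℕ} (h : a + b = a' + b') (h1 : a = a') (i : Fin a) :
    finCongr h (Fin.castAdd b i) = Fin.castAdd b' (finCongr h1 i) := by
  apply Fin.ext; simp

lemma finCongr_natAdd {a b a' b' : ℕ} (h : a + b = a' + b') (h1 : a = a') (j : Fin b) :
    finCongr h (Fin.natAdd a j) = Fin.natAdd a' (finCongr (by omega : b = b') j) := by
  apply Fin.ext; simp [h1]

lemma mul_submatrix_row {l m n p : Type*} [Fintype n] (M : Matrix m n F) (N : Matrix n p F)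
    (f : l → m) : (M * N).submatrix f id = M.submatrix f id * N := by
  rw [Matrix.submatrix_mul M N f id id Function.bijective_id, Matrix.submatrix_id_id]

lemma mul_submatrix_col {m n p q : Type*} [Fintype n] (M : Matrix m n F) (N : Matrix n p F)
    (f : q → p) : (M * N).submatrix id f = M * N.submatrix id f := by
  rw [Matrix.submatrix_mul M N id id f Function.bijective_id, Matrix.submatrix_id_id]

lemma one_submatrix_mul {a c : ℕ} {p : Type*} (e : Fin a ≃ Fin c)
    (N : Matrix (Fin c) p F) : (1 : Matrix (Fin c) (Fin c) F).submatrix ⇑e id * N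
      = N.submatrix ⇑e id := by
  ext i j
  simp [Matrix.mul_apply, Matrix.one_apply]

/-- square reindexed inverse commutes -/
lemma inv_submatrix_equiv {a b : ℕ} (M : Matrix (Fin a) (Fin a) F) (hM : IsUnit M)
    (e : Fin b ≃ Fin a) : (M.submatrix ⇑e ⇑e)⁻¹ = M⁻¹.submatrix ⇑e ⇑e := by
  have hdet : IsUnit M.det := (Matrix.isUnit_iff_isUnit_det M).mp hM
  apply Matrix.inv_eq_left_inv
  rw [Matrix.submatrix_mul_equiv, Matrix.nonsing_inv_mul _ hdet]
  exact Matrix.submatrix_one_equiv e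

lemma map_nonsing_inv {n : ℕ} (M : Matrix (Fin n) (Fin n) F) (hM : IsUnit M)
    {F' : Type*} [Field F'] (f : F →+* F') : (M.map f)⁻¹ = M⁻¹.map f := by
  have hdet : IsUnit M.det := (Matrix.isUnit_iff_isUnit_det M).mp hM
  apply Matrix.inv_eq_right_inv
  rw [← Matrix.map_mul, Matrix.mul_nonsing_inv _ hdet]
  exact Matrix.map_one f f.map_zero f.map_one

lemma isUnit_map {n : ℕ} (M : Matrix (Fin n) (Fin n) F) (hM : IsUnit M)
    {F' : Type*} [Field F'] (f : F →+* F') : IsUnit (M.map f) := by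
  rcases hM with ⟨u, rfl⟩
  exact IsUnit.map f.mapMatrix ⟨u, rfl⟩

/-- the "upper-right zero" block condition for a rectangular matrix -/
def URZ {a b c d : ℕ} (M : Matrix (Fin (a + b)) (Fin (c + d)) F) : Prop :=
  ∀ (i : Fin a) (j : Fin d), M (Fin.castAdd b i) (Fin.natAdd c j) = 0

lemma URZ_mul {a b c d g h : ℕ} {M : Matrix (Fin (a + b)) (Fin (c + d)) F}
    {N : Matrix (Fin (c + d)) (Fin (g + h)) F} (hM : URZ M) (hN : URZ N) :
    URZ (M * N) := by
  intro i j
  rw [Matrix.mul_apply, Fin.sum_univ_add]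
  have h1 : ∀ m : Fin c, M (Fin.castAdd b i) (Fin.castAdd d m) * N (Fin.castAdd d m) (Fin.natAdd g j) = 0 := by
    intro m; rw [hN m j, mul_zero]
  have h2 : ∀ m : Fin d, M (Fin.castAdd b i) (Fin.natAdd c m) * N (Fin.natAdd c m) (Fin.natAdd g j) = 0 := by
    intro m; rw [hM i m, zero_mul]
  simp only [h1, h2, Finset.sum_const_zero, add_zero]

lemma URZ_one {a b : ℕ} : URZ (1 : Matrix (Fin (a + b)) (Fin (a + b)) F) := by
  intro i j
  apply Matrix.one_apply_ne
  intro hc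
  have := congrArg Fin.val hc
  simp only [Fin.coe_castAdd, Fin.coe_natAdd] at this
  omega

lemma URZ_submatrix {a b c d a' b' c' d' : ℕ} {M : Matrix (Fin (a + b)) (Fin (c + d)) F}
    (h : URZ M) (hr : a' + b' = a + b) (hc : c' + d' = c + d)
    (h1 : a' = a) (h3 : c' = c) :
    URZ (M.submatrix (finCongr hr) (finCongr hc)) := by
  intro i j
  rw [Matrix.submatrix_apply, finCongr_castAdd hr h1, finCongr_natAdd hc h3]
  exact h _ _

def toSum {a b c d : ℕ} (M : Matrix (Fin (a + b)) (Fin (c + d)) F) :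
    Matrix (Fin a ⊕ Fin b) (Fin c ⊕ Fin d) F :=
  M.submatrix finSumFinEquiv finSumFinEquiv

lemma toSum_mul {a b c d g h : ℕ} (M : Matrix (Fin (a + b)) (Fin (c + d)) F)
    (N : Matrix (Fin (c + d)) (Fin (g + h)) F) :
    toSum (M * N) = toSum M * toSum N := by
  unfold toSum
  rw [Matrix.submatrix_mul_equiv M N _ finSumFinEquiv _]

lemma toSum_ll {a b c d : ℕ} (M : Matrix (Fin (a + b)) (Fin (c + d)) F) (i j) :
    toSum M (Sum.inl i) (Sum.inl j) = M (Fin.castAdd b i) (Fin.castAdd d j) := by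
  simp [toSum]

lemma toSum_lr {a b c d : ℕ} (M : Matrix (Fin (a + b)) (Fin (c + d)) F) (i j) :
    toSum M (Sum.inl i) (Sum.inr j) = M (Fin.castAdd b i) (Fin.natAdd c j) := by
  simp [toSum]

lemma toSum_rl {a b c d : ℕ} (M : Matrix (Fin (a + b)) (Fin (c + d)) F) (i j) :
    toSum M (Sum.inr i) (Sum.inl j) = M (Fin.natAdd a i) (Fin.castAdd d j) := by
  simp [toSum]

lemma toSum_rr {a b c d : ℕ} (M : Matrix (Fin (a + b)) (Fin (c + d)) F) (i j) :
    toSum M (Sum.inr i) (Sum.inr j) = M (Fin.natAdd a i) (Fin.natAdd c j) := by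
  simp [toSum]

lemma toSum_isUnit {a b : ℕ} {M : Matrix (Fin (a + b)) (Fin (a + b)) F} (hM : IsUnit M) :
    IsUnit (toSum M) := by
  have : toSum M = (Matrix.reindexAlgEquiv F F finSumFinEquiv.symm) M := by
    simp [toSum, Matrix.reindexAlgEquiv_apply, Matrix.reindex_apply]
  rw [this]
  exact hM.map (Matrix.reindexAlgEquiv F F finSumFinEquiv.symm).toAlgHom.toRingHom.toMonoidHom

/-- blocks of a matrix over `Fin (a+b) × Fin (c+d)` -/
def blkTT {a b c d : ℕ} (M : Matrix (Fin (a + b)) (Fin (c + d)) F) : Matrix (Fin a) (Fin c) F :=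
  Matrix.of fun i j => M (Fin.castAdd b i) (Fin.castAdd d j)

def blkWW {a b c d : ℕ} (M : Matrix (Fin (a + b)) (Fin (c + d)) F) : Matrix (Fin b) (Fin d) F :=
  Matrix.of fun i j => M (Fin.natAdd a i) (Fin.natAdd c j)

lemma toSum_blocks {a b c d : ℕ} (M : Matrix (Fin (a + b)) (Fin (c + d)) F) (h : URZ M) :
    toSum M = Matrix.fromBlocks (blkTT M) 0 ((toSum M).toBlocks₂₁) (blkWW M) := by
  have h11 : (toSum M).toBlocks₁₁ = blkTT M := by ext i j; simp [Matrix.toBlocks₁₁, toSum, blkTT]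
  have h22 : (toSum M).toBlocks₂₂ = blkWW M := by ext i j; simp [Matrix.toBlocks₂₂, toSum, blkWW]
  have h12 : (toSum M).toBlocks₁₂ = 0 := by
    ext i j; simp only [Matrix.toBlocks₁₂, Matrix.of_apply, Matrix.zero_apply]
    rw [show toSum M (Sum.inl i) (Sum.inr j) = M (Fin.castAdd b i) (Fin.natAdd c j) from toSum_lr M i j]
    exact h i j
  conv_lhs => rw [← Matrix.fromBlocks_toBlocks (toSum M), h11, h22, h12]

lemma isUnit_blkTT {a b : ℕ} {M : Matrix (Fin (a + b)) (Fin (a + b)) F} (hM : IsUnit M)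
    (h : URZ M) : IsUnit (blkTT M) ∧ IsUnit (blkWW M) := by
  have hN := toSum_isUnit hM
  have hdet : IsUnit (toSum M).det := (Matrix.isUnit_iff_isUnit_det _).mp hN
  rw [toSum_blocks M h, Matrix.det_fromBlocks_zero₁₂] at hdet
  constructor
  · exact (Matrix.isUnit_iff_isUnit_det _).mpr (isUnit_of_mul_isUnit_left hdet)
  · exact (Matrix.isUnit_iff_isUnit_det _).mpr (isUnit_of_mul_isUnit_left (mul_comm (blkTT M).det (blkWW M).det ▸ hdet))

lemma toSum_inv {a b : ℕ} (M : Matrix (Fin (a + b)) (Fin (a + b)) F) (hM : IsUnit M) :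
    toSum M⁻¹ = (toSum M)⁻¹ := by
  symm
  apply Matrix.inv_eq_left_inv
  rw [toSum, toSum, Matrix.submatrix_mul_equiv,
    Matrix.nonsing_inv_mul _ ((Matrix.isUnit_iff_isUnit_det M).mp hM)]
  exact Matrix.submatrix_one_equiv _

lemma URZ_inv {a b : ℕ} {M : Matrix (Fin (a + b)) (Fin (a + b)) F} (hM : IsUnit M)
    (h : URZ M) : URZ M⁻¹ := by
  classical
  obtain ⟨hT, hW⟩ := isUnit_blkTT hM h
  have iT : Invertible (blkTT M) := (blkTT M).invertibleOfIsUnitDet ((Matrix.isUnit_iff_isUnit_det _).mp hT)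
  have iW : Invertible (blkWW M) := (blkWW M).invertibleOfIsUnitDet ((Matrix.isUnit_iff_isUnit_det _).mp hW)
  have iN : Invertible (Matrix.fromBlocks (blkTT M) 0 ((toSum M).toBlocks₂₁) (blkWW M)) :=
    Matrix.fromBlocksZero₁₂Invertible _ _ _
  intro i j
  have key : (toSum M)⁻¹ (Sum.inl i) (Sum.inr j) = 0 := by
    rw [toSum_blocks M h, ← Matrix.invOf_eq_nonsing_inv, Matrix.invOf_fromBlocks_zero₁₂_eq]
    simp
  rw [show M⁻¹ (Fin.castAdd b i) (Fin.natAdd a j) = toSum M⁻¹ (Sum.inl i) (Sum.inr j) from (toSum_lr _ i j).symm,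
    toSum_inv M hM]
  exact key

/-- the "unitriangular" condition: `URZ` plus identity diagonal blocks -/
def UT {a b : ℕ} (M : Matrix (Fin (a + b)) (Fin (a + b)) F) : Prop :=
  URZ M ∧ (∀ i j : Fin a, M (Fin.castAdd b i) (Fin.castAdd b j) = if i = j then 1 else 0)
    ∧ (∀ i j : Fin b, M (Fin.natAdd a i) (Fin.natAdd a j) = if i = j then 1 else 0)

lemma UT_one {a b : ℕ} : UT (1 : Matrix (Fin (a + b)) (Fin (a + b)) F) := by
  refine ⟨URZ_one, fun i j => ?_, fun i j => ?_⟩ <;>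
    simp [Matrix.one_apply, Fin.ext_iff]

lemma UT_blocks {a b : ℕ} {M : Matrix (Fin (a + b)) (Fin (a + b)) F} (h : UT M) :
    toSum M = Matrix.fromBlocks 1 0 ((toSum M).toBlocks₂₁) 1 := by
  have h1 : blkTT M = 1 := by
    ext i j
    show M (Fin.castAdd b i) (Fin.castAdd b j) = (1 : Matrix (Fin a) (Fin a) F) i j
    rw [h.2.1 i j, Matrix.one_apply]
  have h2 : blkWW M = 1 := by
    ext i j
    show M (Fin.natAdd a i) (Fin.natAdd a j) = (1 : Matrix (Fin b) (Fin b) F) i j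
    rw [h.2.2 i j, Matrix.one_apply]
  conv_lhs => rw [toSum_blocks M h.1, h1, h2]

lemma UT_mul {a b : ℕ} {M N : Matrix (Fin (a + b)) (Fin (a + b)) F}
    (hM : UT M) (hN : UT N) : UT (M * N) := by
  refine ⟨URZ_mul hM.1 hN.1, fun i j => ?_, fun i j => ?_⟩
  · rw [Matrix.mul_apply, Fin.sum_univ_add]
    have h2 : ∀ m : Fin b, M (Fin.castAdd b i) (Fin.natAdd a m) * N (Fin.natAdd a m) (Fin.castAdd b j) = 0 := by
      intro m; rw [hM.1 i m, zero_mul]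
    simp only [h2, Finset.sum_const_zero, add_zero]
    simp only [fun m : Fin a => hM.2.1 i m, fun m : Fin a => hN.2.1 m j]
    simp [ite_and, Finset.sum_ite_eq', mul_ite]
  · rw [Matrix.mul_apply, Fin.sum_univ_add]
    have h2 : ∀ m : Fin a, M (Fin.natAdd a i) (Fin.castAdd b m) * N (Fin.castAdd b m) (Fin.natAdd a j) = 0 := by
      intro m; rw [hN.1 m j, mul_zero]
    simp only [h2, Finset.sum_const_zero, zero_add]
    simp only [fun m : Fin b => hM.2.2 i m, fun m : Fin b => hN.2.2 m j]
    simp [ite_and, Finset.sum_ite_eq', mul_ite]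

lemma UT_inv {a b : ℕ} {M : Matrix (Fin (a + b)) (Fin (a + b)) F} (hM : IsUnit M)
    (h : UT M) : UT M⁻¹ := by
  classical
  refine ⟨URZ_inv hM h.1, ?_⟩
  have iO : Invertible (1 : Matrix (Fin a) (Fin a) F) := invertibleOne
  have iO' : Invertible (1 : Matrix (Fin b) (Fin b) F) := invertibleOne
  have iN : Invertible (Matrix.fromBlocks (1 : Matrix (Fin a) (Fin a) F) 0 ((toSum M).toBlocks₂₁) (1 : Matrix (Fin b) (Fin b) F)) :=
    Matrix.fromBlocksZero₁₂Invertible _ _ _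
  have key : toSum M⁻¹ = Matrix.fromBlocks 1 0
      (-((1 : Matrix (Fin b) (Fin b) F) * ((toSum M).toBlocks₂₁) * (1 : Matrix (Fin a) (Fin a) F))) 1 := by
    rw [toSum_inv M hM]
    conv_lhs => rw [UT_blocks h]
    rw [← Matrix.invOf_eq_nonsing_inv, Matrix.invOf_fromBlocks_zero₁₂_eq]
    simp only [invOf_one]
  constructor
  · intro i j
    rw [show M⁻¹ (Fin.castAdd b i) (Fin.castAdd b j) = toSum M⁻¹ (Sum.inl i) (Sum.inl j) from (toSum_ll _ i j).symm,
      key]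
    simp [Matrix.one_apply, Matrix.fromBlocks_apply₁₁]
  · intro i j
    rw [show M⁻¹ (Fin.natAdd a i) (Fin.natAdd a j) = toSum M⁻¹ (Sum.inr i) (Sum.inr j) from (toSum_rr _ i j).symm,
      key]
    simp [Matrix.one_apply, Matrix.fromBlocks_apply₂₂]

end AuxMat


section AuxGrp

open Matrix

variable (p e : ℕ) [Fact p.Prime] (Q : PreGraph) (D : DimVec Q)

lemma GGr_mul_apply (g h : GGr p Q D) (v : Q.V) : (g * h) v = g v * h v := rfl

lemma GGr_inv_apply (g : GGr p Q D) (v : Q.V) : (g⁻¹) v = (g v)⁻¹ := rfl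

lemma GGr_one_apply (v : Q.V) : (1 : GGr p Q D) v = 1 := rfl

lemma actE_apply (g : GGr p Q D) (x : RepSp p Q D) (h : Q.E) :
    actE p Q D g x h = (g (Q.tgt h)).val * x h * ((g (Q.src h))⁻¹).val := rfl

lemma actE_one (x : RepSp p Q D) : actE p Q D 1 x = x := by
  funext h
  simp [actE_apply, GGr_one_apply]

lemma actE_mul (g h : GGr p Q D) (x : RepSp p Q D) :
    actE p Q D (g * h) x = actE p Q D g (actE p Q D h x) := by
  funext k
  simp only [actE_apply, GGr_mul_apply, _root_.mul_inv_rev, Units.val_mul, Matrix.mul_assoc]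

lemma dep_val_congr {F : Type*} [Field F] {ι : Type*} (n : ι → ℕ)
    (f : ∀ i, Matrix (Fin (n i)) (Fin (n i)) F) {v w : ι} (h : v = w) (hn : n v = n w) :
    f v = (f w).submatrix (⇑(finCongr hn)) (⇑(finCongr hn)) := by
  subst h
  have h2 : ⇑(finCongr hn) = id := funext fun i => Fin.ext rfl
  rw [h2, Matrix.submatrix_id_id]

lemma TwFG_mul (g h : GGr p Q D) :
    TwFG p e Q D (g * h) = TwFG p e Q D g * TwFG p e Q D h := by
  funext v
  show TwFG p e Q D (g * h) v = TwFG p e Q D g v * TwFG p e Q D h v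
  unfold TwFG
  rw [GGr_mul_apply, _root_.map_mul, _root_.map_mul]

lemma TwFG_one : TwFG p e Q D 1 = 1 := by
  funext v
  show TwFG p e Q D 1 v = 1
  unfold TwFG
  rw [GGr_one_apply, _root_.map_one, _root_.map_one]

lemma TwFG_inv (g : GGr p Q D) : TwFG p e Q D g⁻¹ = (TwFG p e Q D g)⁻¹ := by
  funext v
  show TwFG p e Q D g⁻¹ v = (TwFG p e Q D g v)⁻¹
  unfold TwFG
  rw [GGr_inv_apply, _root_.map_inv, _root_.map_inv]

lemma TwFG_val (g : GGr p Q D) (v : Q.V) :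
    (TwFG p e Q D g v).val = ((g (Q.aV v)).val.map (frobHom p e)).submatrix
      (⇑(finCongr (D.inv v).symm)) (⇑(finCongr (D.inv v).symm)) := by
  simp [TwFG, Units.coe_mapEquiv, Matrix.reindexAlgEquiv_apply, Matrix.reindex_apply,
    RingHom.mapMatrix_apply]

lemma TwFG_inv_val (g : GGr p Q D) (v : Q.V) :
    ((TwFG p e Q D g v)⁻¹).val = (((g (Q.aV v))⁻¹).val.map (frobHom p e)).submatrix
      (⇑(finCongr (D.inv v).symm)) (⇑(finCongr (D.inv v).symm)) := by
  have h1 : (TwFG p e Q D g v)⁻¹ = TwFG p e Q D g⁻¹ v := by rw [TwFG_inv]; rfl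
  rw [h1, TwFG_val]
  rfl

lemma TwFG_entry (g : GGr p Q D) (v : Q.V) (i j) :
    (TwFG p e Q D g v).val i j = frobHom p e
      ((g (Q.aV v)).val (finCongr (D.inv v).symm i) (finCongr (D.inv v).symm j)) := by
  rw [TwFG_val]
  rfl

lemma TwFE_eq (x : RepSp p Q D) (h : Q.E)
    (pT : D.d (Q.tgt h) = D.d (Q.tgt (Q.aE h))) (pS : D.d (Q.src h) = D.d (Q.src (Q.aE h))) :
    TwFE p e Q D x h = ((x (Q.aE h)).map (frobHom p e)).submatrix
      (⇑(finCongr pT)) (⇑(finCongr pS)) := by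
  ext i j
  simp only [TwFE, Matrix.submatrix_apply, Matrix.map_apply, frobHom, iterateFrobenius_def]

lemma TwFE_act (g : GGr p Q D) (x : RepSp p Q D) :
    TwFE p e Q D (actE p Q D g x) = actE p Q D (TwFG p e Q D g) (TwFE p e Q D x) := by
  funext h
  have pT : D.d (Q.tgt h) = D.d (Q.tgt (Q.aE h)) := by rw [Q.comm_tgt, D.inv]
  have pS : D.d (Q.src h) = D.d (Q.src (Q.aE h)) := by rw [Q.comm_src, D.inv]
  have cT : D.d (Q.tgt (Q.aE h)) = D.d (Q.aV (Q.tgt h)) := congrArg D.d (Q.comm_tgt h)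
  have cS : D.d (Q.src (Q.aE h)) = D.d (Q.aV (Q.src h)) := congrArg D.d (Q.comm_src h)
  have hA : ((g (Q.tgt (Q.aE h))).val)
      = ((g (Q.aV (Q.tgt h))).val).submatrix (⇑(finCongr cT)) (⇑(finCongr cT)) :=
    dep_val_congr D.d (fun v => (g v).val) (Q.comm_tgt h) cT
  have hB : (((g (Q.src (Q.aE h)))⁻¹).val)
      = (((g (Q.aV (Q.src h)))⁻¹).val).submatrix (⇑(finCongr cS)) (⇑(finCongr cS)) :=
    dep_val_congr D.d (fun v => ((g v)⁻¹).val) (Q.comm_src h) cS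
  rw [TwFE_eq p e Q D _ h pT pS, actE_apply, actE_apply,
    TwFE_eq p e Q D x h pT pS, TwFG_val, TwFG_inv_val, hA, hB, Matrix.mul_assoc,
    Matrix.map_mul, Matrix.map_mul, ← Matrix.submatrix_map, ← Matrix.submatrix_map,
    Matrix.submatrix_mul _ _ _ (⇑(finCongr pT)) _ (finCongr pT).bijective,
    Matrix.submatrix_mul _ _ _ (⇑(finCongr pS)) _ (finCongr pS).bijective,
    Matrix.submatrix_submatrix, Matrix.submatrix_submatrix,
    finCongr_comp pT cT, finCongr_comp pS cS, Matrix.mul_assoc]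

lemma TwFE_fix_act {g : GGr p Q D} {x : RepSp p Q D} (hg : TwFG p e Q D g = g)
    (hx : TwFE p e Q D x = x) : TwFE p e Q D (actE p Q D g x) = actE p Q D g x := by
  rw [TwFE_act, hg, hx]

end AuxGrp


section AuxPar

open Matrix

variable (p e : ℕ) [Fact p.Prime] (Q : PreGraph) (Dt Dw : DimVec Q)

lemma SW_iff (x : RepSp p Q (Dt.add Dw)) :
    x ∈ SWSet p Q Dt Dw ↔ ∀ h, URZ (x h) := Iff.rfl

lemma qMem_iff (b : GGr p Q (Dt.add Dw)) :
    qMem p e Q Dt Dw b ↔ (TwFG p e Q (Dt.add Dw) b = b ∧ ∀ v, URZ ((b v).val)) := Iff.rfl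

lemma uMem_iff (u : GGr p Q (Dt.add Dw)) :
    uMem p e Q Dt Dw u ↔ (TwFG p e Q (Dt.add Dw) u = u ∧ ∀ v, UT ((u v).val)) := by
  unfold uMem UT URZ
  refine and_congr_right fun _ => forall_congr' fun v => ?_
  tauto

lemma uMem_qMem {u : GGr p Q (Dt.add Dw)} (hu : uMem p e Q Dt Dw u) :
    qMem p e Q Dt Dw u := by
  rw [uMem_iff] at hu
  exact ⟨hu.1, fun v => (hu.2 v).1⟩

lemma qMem_one : qMem p e Q Dt Dw 1 := by
  rw [qMem_iff]
  refine ⟨TwFG_one p e Q _, fun v => ?_⟩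
  rw [GGr_one_apply, Units.val_one]
  exact URZ_one

lemma qMem_mul {a b : GGr p Q (Dt.add Dw)} (ha : qMem p e Q Dt Dw a)
    (hb : qMem p e Q Dt Dw b) : qMem p e Q Dt Dw (a * b) := by
  rw [qMem_iff] at *
  refine ⟨by rw [TwFG_mul, ha.1, hb.1], fun v => ?_⟩
  rw [GGr_mul_apply, Units.val_mul]
  exact URZ_mul (ha.2 v) (hb.2 v)

lemma qMem_inv {a : GGr p Q (Dt.add Dw)} (ha : qMem p e Q Dt Dw a) :
    qMem p e Q Dt Dw a⁻¹ := by
  rw [qMem_iff] at *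
  refine ⟨by rw [TwFG_inv, ha.1], fun v => ?_⟩
  rw [GGr_inv_apply, Matrix.coe_units_inv]
  exact URZ_inv (a v).isUnit (ha.2 v)

lemma uMem_one : uMem p e Q Dt Dw 1 := by
  rw [uMem_iff]
  refine ⟨TwFG_one p e Q _, fun v => ?_⟩
  rw [GGr_one_apply, Units.val_one]
  exact UT_one

lemma uMem_mul {a b : GGr p Q (Dt.add Dw)} (ha : uMem p e Q Dt Dw a)
    (hb : uMem p e Q Dt Dw b) : uMem p e Q Dt Dw (a * b) := by
  rw [uMem_iff] at *
  refine ⟨by rw [TwFG_mul, ha.1, hb.1], fun v => ?_⟩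
  rw [GGr_mul_apply, Units.val_mul]
  exact UT_mul (ha.2 v) (hb.2 v)

lemma uMem_inv {a : GGr p Q (Dt.add Dw)} (ha : uMem p e Q Dt Dw a) :
    uMem p e Q Dt Dw a⁻¹ := by
  rw [uMem_iff] at *
  refine ⟨by rw [TwFG_inv, ha.1], fun v => ?_⟩
  rw [GGr_inv_apply, Matrix.coe_units_inv]
  exact UT_inv (a v).isUnit (ha.2 v)

lemma goodPair_act {locus : Set (RepSp p Q (Dt.add Dw))}
    (hloc : ∀ (g : GGr p Q (Dt.add Dw)) y, y ∈ locus → actE p Q (Dt.add Dw) g y ∈ locus)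
    {c : GGr p Q (Dt.add Dw) × RepSp p Q (Dt.add Dw)} (hc : goodPair p e Q Dt Dw locus c)
    {b : GGr p Q (Dt.add Dw)} (hb : qMem p e Q Dt Dw b) :
    goodPair p e Q Dt Dw locus (c.1 * b⁻¹, actE p Q (Dt.add Dw) b c.2) := by
  obtain ⟨h1, h2, h3, h4⟩ := hc
  refine ⟨?_, TwFE_fix_act p e Q _ hb.1 h2, ?_, hloc b c.2 h4⟩
  · show TwFG p e Q (Dt.add Dw) (c.1 * b⁻¹) = c.1 * b⁻¹
    rw [TwFG_mul, h1, TwFG_inv, hb.1]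
  · intro h i j
    have hx : URZ (c.2 h) := fun i j => h3 h i j
    have hT : URZ ((b (Q.tgt h)).val) := fun i j => hb.2 (Q.tgt h) i j
    have hS : URZ (((b (Q.src h))⁻¹).val) := by
      rw [Matrix.coe_units_inv]
      exact URZ_inv (b (Q.src h)).isUnit (fun i j => hb.2 (Q.src h) i j)
    exact URZ_mul (URZ_mul hT hx) hS i j

/-- the standard `(g,x) ↦ (g m⁻¹, m·x)` action on pairs -/
def pAct {p : ℕ} [Fact p.Prime] {Q : PreGraph} {D : DimVec Q} (m : GGr p Q D)
    (c : GGr p Q D × RepSp p Q D) : GGr p Q D × RepSp p Q D :=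
  (c.1 * m⁻¹, actE p Q D m c.2)

lemma pAct_one {D : DimVec Q} (c : GGr p Q D × RepSp p Q D) : pAct 1 c = c := by
  unfold pAct
  rw [inv_one, mul_one, actE_one]

lemma pAct_mul {D : DimVec Q} (m n : GGr p Q D) (c : GGr p Q D × RepSp p Q D) :
    pAct (m * n) c = pAct m (pAct n c) := by
  unfold pAct
  rw [_root_.mul_inv_rev, actE_mul, ← mul_assoc]

lemma quot_exact {α : Type*} {G : Type*} [Group G] (A : G → α → α) (S : Set G)
    (good : α → Prop) {rel : α → α → Prop}
    (h1 : ∀ a, A 1 a = a) (hm : ∀ m n a, A (m * n) a = A m (A n a))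
    (hS1 : (1 : G) ∈ S)
    (hSi : ∀ m, m ∈ S → m⁻¹ ∈ S) (hSm : ∀ m n, m ∈ S → n ∈ S → m * n ∈ S)
    (hgood : ∀ m a, m ∈ S → good a → good (A m a))
    (hrel : ∀ c d, rel c d ↔ good c ∧ ∃ m ∈ S, d = A m c)
    {a b : α} (hab : Quot.mk rel a = Quot.mk rel b) (ha : good a) :
    ∃ m ∈ S, b = A m a := by
  have h := Quot.eqvGen_exact hab
  suffices H : (good a → ∃ m ∈ S, b = A m a) ∧ (good b → ∃ m ∈ S, a = A m b) from H.1 ha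
  clear hab ha
  induction h with
  | rel x y hxy =>
      obtain ⟨hgx, m, hmS, rfl⟩ := (hrel x y).mp hxy
      refine ⟨fun _ => ⟨m, hmS, rfl⟩, fun _ => ⟨m⁻¹, hSi m hmS, ?_⟩⟩
      rw [← hm, inv_mul_cancel, h1]
  | refl x => exact ⟨fun _ => ⟨1, hS1, (h1 x).symm⟩, fun _ => ⟨1, hS1, (h1 x).symm⟩⟩
  | symm x y hxy ih => exact ⟨ih.2, ih.1⟩
  | trans x y z hxy hyz ih1 ih2 =>
      constructor
      · intro hx
        obtain ⟨m, hmS, rfl⟩ := ih1.1 hx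
        obtain ⟨n, hnS, rfl⟩ := ih2.1 (hgood m x hmS hx)
        exact ⟨n * m, hSm n m hnS hmS, (hm n m x).symm⟩
      · intro hz
        obtain ⟨m, hmS, rfl⟩ := ih2.2 hz
        obtain ⟨n, hnS, rfl⟩ := ih1.2 (hgood m z hmS hz)
        exact ⟨n * m, hSm n m hnS hmS, (hm n m z).symm⟩

lemma relU_iff (locus : Set (RepSp p Q (Dt.add Dw))) (c d) :
    relU p e Q Dt Dw locus c d ↔ goodPair p e Q Dt Dw locus c ∧
      ∃ m ∈ {u | uMem p e Q Dt Dw u}, d = pAct m c := by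
  unfold relU
  refine and_congr_right fun _ => ?_
  constructor
  · rintro ⟨u, hu, hd1, hd2⟩
    exact ⟨u, hu, Prod.ext_iff.mpr ⟨hd1, hd2⟩⟩
  · rintro ⟨u, hu, rfl⟩
    exact ⟨u, hu, rfl, rfl⟩

lemma relQ_iff (locus : Set (RepSp p Q (Dt.add Dw))) (c d) :
    relQ p e Q Dt Dw locus c d ↔ goodPair p e Q Dt Dw locus c ∧
      ∃ m ∈ {b | qMem p e Q Dt Dw b}, d = pAct m c := by
  unfold relQ
  refine and_congr_right fun _ => ?_
  constructor
  · rintro ⟨u, hu, hd1, hd2⟩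
    exact ⟨u, hu, Prod.ext_iff.mpr ⟨hd1, hd2⟩⟩
  · rintro ⟨u, hu, rfl⟩
    exact ⟨u, hu, rfl, rfl⟩

lemma mkU_exact {locus : Set (RepSp p Q (Dt.add Dw))}
    (hloc : ∀ (g : GGr p Q (Dt.add Dw)) y, y ∈ locus → actE p Q (Dt.add Dw) g y ∈ locus)
    {a b : GGr p Q (Dt.add Dw) × RepSp p Q (Dt.add Dw)}
    (hab : Quot.mk (relU p e Q Dt Dw locus) a = Quot.mk (relU p e Q Dt Dw locus) b)
    (ha : goodPair p e Q Dt Dw locus a) :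
    ∃ u, uMem p e Q Dt Dw u ∧ b = pAct u a := by
  have h := quot_exact pAct {u | uMem p e Q Dt Dw u} (goodPair p e Q Dt Dw locus)
    (pAct_one p Q) (pAct_mul p Q) (uMem_one p e Q Dt Dw)
    (fun m hm => uMem_inv p e Q Dt Dw hm) (fun m n hm hn => uMem_mul p e Q Dt Dw hm hn)
    (fun m a hm ha => goodPair_act p e Q Dt Dw hloc ha (uMem_qMem p e Q Dt Dw hm))
    (relU_iff p e Q Dt Dw locus) hab ha
  obtain ⟨m, hm, hb⟩ := h
  exact ⟨m, hm, hb⟩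

lemma mkQ_exact {locus : Set (RepSp p Q (Dt.add Dw))}
    (hloc : ∀ (g : GGr p Q (Dt.add Dw)) y, y ∈ locus → actE p Q (Dt.add Dw) g y ∈ locus)
    {a b : GGr p Q (Dt.add Dw) × RepSp p Q (Dt.add Dw)}
    (hab : Quot.mk (relQ p e Q Dt Dw locus) a = Quot.mk (relQ p e Q Dt Dw locus) b)
    (ha : goodPair p e Q Dt Dw locus a) :
    ∃ u, qMem p e Q Dt Dw u ∧ b = pAct u a := by
  have h := quot_exact pAct {u | qMem p e Q Dt Dw u} (goodPair p e Q Dt Dw locus)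
    (pAct_one p Q) (pAct_mul p Q) (qMem_one p e Q Dt Dw)
    (fun m hm => qMem_inv p e Q Dt Dw hm) (fun m n hm hn => qMem_mul p e Q Dt Dw hm hn)
    (fun m a hm ha => goodPair_act p e Q Dt Dw hloc ha hm)
    (relQ_iff p e Q Dt Dw locus) hab ha
  obtain ⟨m, hm, hb⟩ := h
  exact ⟨m, hm, hb⟩

lemma mkU_sound {locus : Set (RepSp p Q (Dt.add Dw))}
    {a : GGr p Q (Dt.add Dw) × RepSp p Q (Dt.add Dw)}
    (ha : goodPair p e Q Dt Dw locus a) {u} (hu : uMem p e Q Dt Dw u) :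
    Quot.mk (relU p e Q Dt Dw locus) a = Quot.mk (relU p e Q Dt Dw locus) (pAct u a) :=
  Quot.sound ((relU_iff p e Q Dt Dw locus a _).mpr ⟨ha, u, hu, rfl⟩)

lemma mkQ_sound {locus : Set (RepSp p Q (Dt.add Dw))}
    {a : GGr p Q (Dt.add Dw) × RepSp p Q (Dt.add Dw)}
    (ha : goodPair p e Q Dt Dw locus a) {u} (hu : qMem p e Q Dt Dw u) :
    Quot.mk (relQ p e Q Dt Dw locus) a = Quot.mk (relQ p e Q Dt Dw locus) (pAct u a) :=
  Quot.sound ((relQ_iff p e Q Dt Dw locus a _).mpr ⟨ha, u, hu, rfl⟩)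

end AuxPar


section AuxDiag

open Matrix

variable (p e : ℕ) [Fact p.Prime]

lemma glFB_cc {m n : ℕ} (A : GL (Fin m) (Kp p)) (B : GL (Fin n) (Kp p)) (i : Fin m) (j : Fin m) :
    (glFromBlocks A B).val (Fin.castAdd n i) (Fin.castAdd n j) = A.val i j := by
  show (Matrix.fromBlocks A.val 0 0 B.val).submatrix
    (⇑finSumFinEquiv.symm) (⇑finSumFinEquiv.symm) _ _ = _
  rw [Matrix.submatrix_apply, finSumFinEquiv_symm_apply_castAdd, finSumFinEquiv_symm_apply_castAdd]
  rfl

lemma glFB_cn {m n : ℕ} (A : GL (Fin m) (Kp p)) (B : GL (Fin n) (Kp p)) (i : Fin m) (j : Fin n) :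
    (glFromBlocks A B).val (Fin.castAdd n i) (Fin.natAdd m j) = 0 := by
  show (Matrix.fromBlocks A.val 0 0 B.val).submatrix
    (⇑finSumFinEquiv.symm) (⇑finSumFinEquiv.symm) _ _ = _
  rw [Matrix.submatrix_apply, finSumFinEquiv_symm_apply_castAdd, finSumFinEquiv_symm_apply_natAdd]
  rfl

lemma glFB_nc {m n : ℕ} (A : GL (Fin m) (Kp p)) (B : GL (Fin n) (Kp p)) (i : Fin n) (j : Fin m) :
    (glFromBlocks A B).val (Fin.natAdd m i) (Fin.castAdd n j) = 0 := by
  show (Matrix.fromBlocks A.val 0 0 B.val).submatrix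
    (⇑finSumFinEquiv.symm) (⇑finSumFinEquiv.symm) _ _ = _
  rw [Matrix.submatrix_apply, finSumFinEquiv_symm_apply_natAdd, finSumFinEquiv_symm_apply_castAdd]
  rfl

lemma glFB_nn {m n : ℕ} (A : GL (Fin m) (Kp p)) (B : GL (Fin n) (Kp p)) (i : Fin n) (j : Fin n) :
    (glFromBlocks A B).val (Fin.natAdd m i) (Fin.natAdd m j) = B.val i j := by
  show (Matrix.fromBlocks A.val 0 0 B.val).submatrix
    (⇑finSumFinEquiv.symm) (⇑finSumFinEquiv.symm) _ _ = _
  rw [Matrix.submatrix_apply, finSumFinEquiv_symm_apply_natAdd, finSumFinEquiv_symm_apply_natAdd]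
  rfl

lemma toSum_glFB {m n : ℕ} (A : GL (Fin m) (Kp p)) (B : GL (Fin n) (Kp p)) :
    toSum ((glFromBlocks A B).val) = Matrix.fromBlocks A.val 0 0 B.val := by
  show ((Matrix.fromBlocks A.val 0 0 B.val).submatrix
      (⇑finSumFinEquiv.symm) (⇑finSumFinEquiv.symm)).submatrix ⇑finSumFinEquiv ⇑finSumFinEquiv = _
  rw [Matrix.submatrix_submatrix, Equiv.symm_comp_self, Matrix.submatrix_id_id]

lemma glFB_one {m n : ℕ} :
    glFromBlocks (1 : GL (Fin m) (Kp p)) (1 : GL (Fin n) (Kp p)) = 1 := by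
  apply Units.ext
  show (Matrix.fromBlocks (1 : GL (Fin m) (Kp p)).val 0 0 (1 : GL (Fin n) (Kp p)).val).submatrix
    (⇑finSumFinEquiv.symm) (⇑finSumFinEquiv.symm) = _
  rw [Units.val_one, Units.val_one, Units.val_one, Matrix.fromBlocks_one]
  exact Matrix.submatrix_one_equiv _

variable (Q : PreGraph) (Dt Dw : DimVec Q)

lemma embedDiag_apply (s : GGr p Q Dt) (t : GGr p Q Dw) (v : Q.V) :
    embedDiag s t v = glFromBlocks (s v) (t v) := rfl

lemma embedDiag_inv (s : GGr p Q Dt) (t : GGr p Q Dw) :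
    (embedDiag s t)⁻¹ = embedDiag s⁻¹ t⁻¹ := by
  funext v
  show ((embedDiag s t) v)⁻¹ = glFromBlocks (s⁻¹ v) (t⁻¹ v)
  apply Units.ext
  rfl

lemma TwFG_embedDiag (s : GGr p Q Dt) (t : GGr p Q Dw) :
    TwFG p e Q (Dt.add Dw) (embedDiag s t)
      = embedDiag (TwFG p e Q Dt s) (TwFG p e Q Dw t) := by
  funext v
  apply Units.ext
  ext i j
  rw [TwFG_entry]
  have hc : ∀ i : Fin (Dt.d v), (finCongr (((Dt.add Dw).inv v).symm)) (Fin.castAdd (Dw.d v) i)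
      = Fin.castAdd (Dw.d (Q.aV v)) (finCongr (Dt.inv v).symm i) :=
    fun i => Fin.ext rfl
  have hn : ∀ j : Fin (Dw.d v), (finCongr (((Dt.add Dw).inv v).symm)) (Fin.natAdd (Dt.d v) j)
      = Fin.natAdd (Dt.d (Q.aV v)) (finCongr (Dw.inv v).symm j) :=
    fun j => Fin.ext (by show Dt.d v + (j : ℕ) = Dt.d (Q.aV v) + (j : ℕ); rw [Dt.inv v])
  induction i using Fin.addCases with
  | left i =>
      induction j using Fin.addCases with
      | left j => rw [hc, hc, embedDiag_apply, embedDiag_apply, glFB_cc, glFB_cc, ← TwFG_entry]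
      | right j => rw [hc, hn, embedDiag_apply, embedDiag_apply, glFB_cn, glFB_cn, map_zero]
  | right i =>
      induction j using Fin.addCases with
      | left j => rw [hn, hc, embedDiag_apply, embedDiag_apply, glFB_nc, glFB_nc, map_zero]
      | right j => rw [hn, hn, embedDiag_apply, embedDiag_apply, glFB_nn, glFB_nn, ← TwFG_entry]

lemma embedDiag_qMem {s : GGr p Q Dt} {t : GGr p Q Dw} (hs : TwFG p e Q Dt s = s)
    (ht : TwFG p e Q Dw t = t) : qMem p e Q Dt Dw (embedDiag s t) :=
  ⟨by rw [TwFG_embedDiag, hs, ht], fun v i j => glFB_cn p _ _ i j⟩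

lemma embedDiag_uMem_one {s : GGr p Q Dt} {t : GGr p Q Dw}
    (h : uMem p e Q Dt Dw (embedDiag s t)) : s = 1 ∧ t = 1 := by
  constructor
  · funext v
    apply Units.ext
    ext i j
    have h1 := (h.2 v).1 i j
    rw [embedDiag_apply, glFB_cc] at h1
    rw [GGr_one_apply, Units.val_one, h1, Matrix.one_apply]
  · funext v
    apply Units.ext
    ext i j
    have h1 := (h.2 v).2.2 i j
    rw [embedDiag_apply, glFB_nn] at h1
    rw [GGr_one_apply, Units.val_one, h1, Matrix.one_apply]

lemma TwFG_blkT_fix {q : GGr p Q (Dt.add Dw)} (hq : TwFG p e Q (Dt.add Dw) q = q)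
    {s : GGr p Q Dt} (hs : ∀ v, (s v).val = blkTT ((q v).val)) : TwFG p e Q Dt s = s := by
  funext v
  apply Units.ext
  ext i j
  rw [TwFG_entry, hs, hs]
  show frobHom p e ((q (Q.aV v)).val (Fin.castAdd _ (finCongr (Dt.inv v).symm i))
    (Fin.castAdd _ (finCongr (Dt.inv v).symm j)))
    = (q v).val (Fin.castAdd _ i) (Fin.castAdd _ j)
  have hc : ∀ i : Fin (Dt.d v), (finCongr (((Dt.add Dw).inv v).symm)) (Fin.castAdd (Dw.d v) i)
      = Fin.castAdd (Dw.d (Q.aV v)) (finCongr (Dt.inv v).symm i) :=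
    fun i => Fin.ext rfl
  conv_rhs => rw [← hq]
  erw [TwFG_entry, hc, hc]

lemma TwFG_blkW_fix {q : GGr p Q (Dt.add Dw)} (hq : TwFG p e Q (Dt.add Dw) q = q)
    {t : GGr p Q Dw} (ht : ∀ v, (t v).val = blkWW ((q v).val)) : TwFG p e Q Dw t = t := by
  funext v
  apply Units.ext
  ext i j
  rw [TwFG_entry, ht, ht]
  show frobHom p e ((q (Q.aV v)).val (Fin.natAdd _ (finCongr (Dw.inv v).symm i))
    (Fin.natAdd _ (finCongr (Dw.inv v).symm j)))
    = (q v).val (Fin.natAdd _ i) (Fin.natAdd _ j)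
  have hn : ∀ j : Fin (Dw.d v), (finCongr (((Dt.add Dw).inv v).symm)) (Fin.natAdd (Dt.d v) j)
      = Fin.natAdd (Dt.d (Q.aV v)) (finCongr (Dw.inv v).symm j) :=
    fun j => Fin.ext (by show Dt.d v + (j : ℕ) = Dt.d (Q.aV v) + (j : ℕ); rw [Dt.inv v])
  conv_rhs => rw [← hq]
  erw [TwFG_entry, hn, hn]

end AuxDiag


section AuxHeart

open Matrix

variable {F : Type*} [Field F]

lemma mulVecLin_submatrix_bijective {a b : ℕ} (M : Matrix (Fin a) (Fin b) F)
    (hM : Function.Bijective (Matrix.mulVecLin M)) (e : Fin b ≃ Fin a) :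
    Function.Bijective (Matrix.mulVecLin (M.submatrix ⇑e id)) := by
  have key : ⇑(Matrix.mulVecLin (M.submatrix ⇑e id))
      = (fun w : Fin a → F => (w ∘ ⇑e : Fin b → F)) ∘ ⇑(Matrix.mulVecLin M) := by
    funext v
    funext i
    simp [Matrix.mulVecLin_apply, Matrix.mulVec, Matrix.submatrix_apply, dotProduct]
  have hbij : Function.Bijective (fun w : Fin a → F => (w ∘ ⇑e : Fin b → F)) := by
    have h2 : (fun w : Fin a → F => (w ∘ ⇑e : Fin b → F))
        = ⇑((Equiv.arrowCongr e (Equiv.refl F)).symm) := by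
      funext w
      funext i
      simp [Equiv.arrowCongr]
    rw [h2]
    exact Equiv.bijective _
  show Function.Bijective ⇑(Matrix.mulVecLin (M.submatrix ⇑e id))
  rw [key]
  exact hbij.comp hM

lemma isUnit_of_mulVecLin_bijective {n : ℕ} (M : Matrix (Fin n) (Fin n) F)
    (h : Function.Bijective (Matrix.mulVecLin M)) : IsUnit M := by
  apply Matrix.mulVec_injective_iff_isUnit.mp
  have : Function.Injective ⇑(Matrix.mulVecLin M) := h.injective
  rwa [Matrix.coe_mulVecLin] at this

variable (p e : ℕ) [Fact p.Prime] (C : CSetup)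

lemma d_orbit (D : DimVec C.toPreGraph) {v w : C.V} (h : inOrbit C.aV v w) :
    D.d w = D.d v := by
  obtain ⟨n, rfl⟩ := h
  exact D.inv_zpow n v

lemma d_src (D : DimVec C.toPreGraph) {k : C.E} (hk : C.isHK k) :
    D.d (C.src k) = D.d C.ip := d_orbit C D (C.hk_src hk)

lemma d_tgt (D : DimVec C.toPreGraph) {k : C.E} (hk : C.isHK k) :
    D.d (C.tgt k) = D.d C.im := d_orbit C D (C.hk_tgt hk)

lemma d_ts {D : DimVec C.toPreGraph} (hbal : D.bal C) {k : C.E} (hk : C.isHK k) :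
    D.d (C.tgt k) = D.d (C.src k) := by
  rw [d_tgt C D hk, d_src C D hk, ← hbal]

lemma add_bal {Dt Dw : DimVec C.toPreGraph} (ht : Dt.bal C) (hw : Dw.bal C) :
    (Dt.add Dw).bal C := by
  show Dt.d C.ip + Dw.d C.ip = Dt.d C.im + Dw.d C.im
  rw [ht, hw]

lemma isHK_aE {k : C.E} (hk : C.isHK k) : C.isHK (C.aE k) :=
  (inOrbit_apply C.aE C.e0 k).mpr hk

lemma heart_unit (D : DimVec C.toPreGraph) {x : RepSp p C.toPreGraph D}
    (hx : x ∈ heartSet p C D) {k : C.E} (hk : C.isHK k)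
    (h : D.d (C.tgt k) = D.d (C.src k)) :
    IsUnit ((x k).submatrix (⇑(finCongr h.symm)) id) :=
  isUnit_of_mulVecLin_bijective _ (mulVecLin_submatrix_bijective _ (hx k hk) _)

lemma GL_mulVecLin_bijective {n : ℕ} (u : GL (Fin n) F) :
    Function.Bijective (Matrix.mulVecLin u.val) := by
  constructor
  · have := Matrix.mulVec_injective_iff_isUnit.mpr u.isUnit
    rwa [← Matrix.coe_mulVecLin] at this
  · have := Matrix.mulVec_surjective_iff_isUnit.mpr u.isUnit
    rwa [← Matrix.coe_mulVecLin] at this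

lemma actE_heart (D : DimVec C.toPreGraph) (g : GGr p C.toPreGraph D)
    {x : RepSp p C.toPreGraph D} (hx : x ∈ heartSet p C D) :
    actE p C.toPreGraph D g x ∈ heartSet p C D := by
  intro k hk
  have h1 : actE p C.toPreGraph D g x k
      = (g (C.tgt k)).val * x k * ((g (C.src k))⁻¹).val := rfl
  rw [h1, Matrix.mulVecLin_mul, Matrix.mulVecLin_mul, LinearMap.coe_comp, LinearMap.coe_comp]
  exact ((GL_mulVecLin_bijective _).comp (hx k hk)).comp (GL_mulVecLin_bijective _)

lemma heart_act_closed (Dt Dw : DimVec C.toPreGraph) :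
    ∀ (g : GGr p C.toPreGraph (Dt.add Dw)) (y : RepSp p C.toPreGraph (Dt.add Dw)),
      y ∈ heartSet p C (Dt.add Dw) →
      actE p C.toPreGraph (Dt.add Dw) g y ∈ heartSet p C (Dt.add Dw) :=
  fun g y hy => actE_heart p C (Dt.add Dw) g hy

lemma univ_act_closed (Q : PreGraph) (D : DimVec Q) :
    ∀ (g : GGr p Q D) (y : RepSp p Q D), y ∈ (Set.univ : Set (RepSp p Q D)) →
      actE p Q D g y ∈ (Set.univ : Set (RepSp p Q D)) :=
  fun _ _ _ => Set.mem_univ _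

end AuxHeart


section AuxProj

open Matrix

variable (p e : ℕ) [Fact p.Prime] (C : CSetup)

lemma projG_mul (D : DimVec C.toPreGraph) (g h : GGr p C.toPreGraph D) :
    projG p C D (g * h) = projG p C D g * projG p C D h := rfl

lemma projG_inv (D : DimVec C.toPreGraph) (g : GGr p C.toPreGraph D) :
    projG p C D g⁻¹ = (projG p C D g)⁻¹ := rfl

lemma projG_one (D : DimVec C.toPreGraph) : projG p C D (1 : GGr p C.toPreGraph D) = 1 := rfl

lemma TwFG_projG (D : DimVec C.toPreGraph) (g : GGr p C.toPreGraph D) (v : C.VHat) :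
    TwFG p e C.GHat (D.hat C) (projG p C D g) v = TwFG p e C.toPreGraph D g v.1 := rfl

lemma projG_fixed {D : DimVec C.toPreGraph} {g : GGr p C.toPreGraph D}
    (hg : TwFG p e C.toPreGraph D g = g) :
    TwFG p e C.GHat (D.hat C) (projG p C D g) = projG p C D g := by
  funext v
  erw [TwFG_projG]
  exact congrFun hg v.1

lemma projG_uMem {Dt Dw : DimVec C.toPreGraph} {u : GGr p C.toPreGraph (Dt.add Dw)}
    (hu : uMem p e C.toPreGraph Dt Dw u) :
    uMem p e C.GHat (Dt.hat C) (Dw.hat C) (projG p C (Dt.add Dw) u) :=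
  ⟨projG_fixed p e C hu.1, fun v => hu.2 v.1⟩

lemma projG_qMem {Dt Dw : DimVec C.toPreGraph} {u : GGr p C.toPreGraph (Dt.add Dw)}
    (hu : qMem p e C.toPreGraph Dt Dw u) :
    qMem p e C.GHat (Dt.hat C) (Dw.hat C) (projG p C (Dt.add Dw) u) :=
  ⟨projG_fixed p e C hu.1, fun v => hu.2 v.1⟩

open scoped Classical in
/-- lift a group element of the contracted graph, by `1` on `[i₋]` -/
noncomputable def liftG (D : DimVec C.toPreGraph) (g : GGr p C.GHat (D.hat C)) :
    GGr p C.toPreGraph D := fun v =>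
  if h : inOrbit C.aV C.im v then 1 else g ⟨v, h⟩

lemma liftG_proj (D : DimVec C.toPreGraph) (g : GGr p C.GHat (D.hat C)) :
    projG p C D (liftG p C D g) = g := by
  funext v
  show liftG p C D g v.1 = g v
  unfold liftG
  erw [dif_neg v.2]
  exact rfl

lemma liftG_fixed (D : DimVec C.toPreGraph) {g : GGr p C.GHat (D.hat C)}
    (hg : TwFG p e C.GHat (D.hat C) g = g) :
    TwFG p e C.toPreGraph D (liftG p C D g) = liftG p C D g := by
  funext v
  by_cases h : inOrbit C.aV C.im v
  · have h2 : inOrbit C.aV C.im (C.aV v) := (inOrbit_apply C.aV C.im v).mpr h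
    have e1 : liftG p C D g (C.aV v) = 1 := dif_pos h2
    have e2 : liftG p C D g v = 1 := dif_pos h
    unfold TwFG
    rw [e1, e2, _root_.map_one, _root_.map_one]
  · have h2 : ¬ inOrbit C.aV C.im (C.aV v) := fun hc => h ((inOrbit_apply C.aV C.im v).mp hc)
    have e1 : liftG p C D g (C.aV v) = g ⟨C.aV v, h2⟩ := dif_neg h2
    have e2 : liftG p C D g v = g ⟨v, h⟩ := dif_neg h
    have e3 : TwFG p e C.toPreGraph D (liftG p C D g) v
        = TwFG p e C.GHat (D.hat C) g ⟨v, h⟩ := by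
      unfold TwFG
      rw [e1]
      rfl
    rw [e3, e2]
    exact congrFun hg ⟨v, h⟩

end AuxProj


section AuxMuE1

open Matrix

variable {F : Type*} [Field F]

lemma URZ_submatrix_row {a b c d a' b' : ℕ} {M : Matrix (Fin (a + b)) (Fin (c + d)) F}
    (h : URZ M) (hr : a' + b' = a + b) (h1 : a' = a) :
    URZ (M.submatrix (⇑(finCongr hr)) id) := by
  intro i j
  rw [Matrix.submatrix_apply, finCongr_castAdd hr h1]
  exact h _ _

lemma URZ_submatrix_col {a b c d c' d' : ℕ} {M : Matrix (Fin (a + b)) (Fin (c + d)) F}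
    (h : URZ M) (hc : c' + d' = c + d) (h3 : c' = c) :
    URZ (M.submatrix id (⇑(finCongr hc))) := by
  intro i j
  rw [Matrix.submatrix_apply, finCongr_natAdd hc h3]
  exact h _ _

variable (p e : ℕ) [Fact p.Prime] (C : CSetup)

lemma castMul_eq {a b c d : ℕ} (A : Matrix (Fin a) (Fin b) (Kp p))
    (B : Matrix (Fin c) (Fin d) (Kp p)) (h : b = c) :
    castMul A B = A * B.submatrix (⇑(finCongr h)) id := dif_pos h

lemma invSq_eq {a b : ℕ} (M : Matrix (Fin a) (Fin b) (Kp p)) (h : a = b) :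
    invSq M = ((M.submatrix (⇑(finCongr h.symm)) id)⁻¹).submatrix id (⇑(finCongr h)) := dif_pos h

lemma muE_inl (D : DimVec C.toPreGraph) (x : RepSp p C.toPreGraph D) (h : C.E)
    (pf : C.PHat (Sum.inl h)) : muE p C D x ⟨Sum.inl h, pf⟩ = x h := rfl

lemma muE_comp (D : DimVec C.toPreGraph) (x : RepSp p C.toPreGraph D) (k l : C.E)
    (pf : C.PHat (Sum.inr (Sum.inl (k, l)))) :
    muE p C D x ⟨Sum.inr (Sum.inl (k, l)), pf⟩ = castMul (x l) (x k) := rfl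

lemma muE_icomp (D : DimVec C.toPreGraph) (x : RepSp p C.toPreGraph D) (k l : C.E)
    (pf : C.PHat (Sum.inr (Sum.inr (k, l)))) :
    muE p C D x ⟨Sum.inr (Sum.inr (k, l)), pf⟩ = castMul (invSq (x k)) (x l) := rfl

lemma SW_URZ {Dt Dw : DimVec C.toPreGraph} {x : RepSp p C.toPreGraph (Dt.add Dw)}
    (hsw : x ∈ SWSet p C.toPreGraph Dt Dw) (h : C.E) : URZ (x h) :=
  fun i j => hsw h i j

lemma muE_SW {Dt Dw : DimVec C.toPreGraph} (hbt : Dt.bal C) (hbw : Dw.bal C)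
    {x : RepSp p C.toPreGraph (Dt.add Dw)} (hsw : x ∈ SWSet p C.toPreGraph Dt Dw)
    (hx : x ∈ heartSet p C (Dt.add Dw)) :
    muE p C (Dt.add Dw) x ∈ SWSet p C.GHat (Dt.hat C) (Dw.hat C) := by
  rintro ⟨h | ⟨k, l⟩ | ⟨k, l⟩, pf⟩ i j
  · exact hsw h i j
  · have hk : C.isHK k := pf.1
    have hsl : C.src l = C.tgt k := pf.2
    have m : (Dt.add Dw).d (C.src l) = (Dt.add Dw).d (C.tgt k) := congrArg _ hsl
    have e0 : muE p C (Dt.add Dw) x ⟨Sum.inr (Sum.inl (k, l)), pf⟩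
        = x l * (x k).submatrix (⇑(finCongr m)) id := by
      rw [muE_comp, castMul_eq p _ _ m]
    rw [e0]
    exact URZ_mul (SW_URZ p C hsw l)
      (URZ_submatrix_row (SW_URZ p C hsw k) m (congrArg Dt.d hsl)) i j
  · have hk : C.isHK k := pf.1
    have htl : C.tgt l = C.tgt k := pf.2.1
    have hsq : (Dt.add Dw).d (C.tgt k) = (Dt.add Dw).d (C.src k) :=
      d_ts C (add_bal C hbt hbw) hk
    have hsqT : Dt.d (C.tgt k) = Dt.d (C.src k) := d_ts C hbt hk
    have m2 : (Dt.add Dw).d (C.tgt k) = (Dt.add Dw).d (C.tgt l) := congrArg _ htl.symm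
    have e0 : muE p C (Dt.add Dw) x ⟨Sum.inr (Sum.inr (k, l)), pf⟩
        = (((x k).submatrix (⇑(finCongr hsq.symm)) id)⁻¹).submatrix id (⇑(finCongr hsq))
          * (x l).submatrix (⇑(finCongr m2)) id := by
      rw [muE_icomp, castMul_eq p _ _ m2, invSq_eq p _ hsq]
    rw [e0]
    have hS : URZ ((x k).submatrix (⇑(finCongr hsq.symm)) id) :=
      URZ_submatrix_row (SW_URZ p C hsw k) hsq.symm hsqT.symm
    have hSi : URZ (((x k).submatrix (⇑(finCongr hsq.symm)) id)⁻¹) :=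
      URZ_inv (heart_unit p C _ hx hk hsq) hS
    exact URZ_mul (URZ_submatrix_col hSi hsq hsqT)
      (URZ_submatrix_row (SW_URZ p C hsw l) m2 (congrArg Dt.d htl.symm)) i j

end AuxMuE1


section AuxMuE2

open Matrix

variable (p e : ℕ) [Fact p.Prime] (C : CSetup)

lemma fix_plain (D : DimVec C.toPreGraph) {x : RepSp p C.toPreGraph D}
    (hfx : TwFE p e C.toPreGraph D x = x) (k : C.E)
    (pT : D.d (C.tgt k) = D.d (C.tgt (C.aE k))) (pS : D.d (C.src k) = D.d (C.src (C.aE k))) :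
    ((x (C.aE k)).map (frobHom p e)).submatrix (⇑(finCongr pT)) (⇑(finCongr pS)) = x k := by
  rw [← TwFE_eq p e C.toPreGraph D x k pT pS]
  exact congrFun hfx k

lemma fix_submatrix_id (D : DimVec C.toPreGraph) {x : RepSp p C.toPreGraph D}
    (hfx : TwFE p e C.toPreGraph D x = x) (k : C.E) {a : ℕ}
    (h1 : a = D.d (C.tgt (C.aE k))) (h3 : a = D.d (C.tgt k))
    (pS : D.d (C.src k) = D.d (C.src (C.aE k))) :
    ((x (C.aE k)).map (frobHom p e)).submatrix (⇑(finCongr h1)) (⇑(finCongr pS))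
      = (x k).submatrix (⇑(finCongr h3)) id := by
  have pT : D.d (C.tgt k) = D.d (C.tgt (C.aE k)) := by rw [C.toPreGraph.comm_tgt, D.inv]
  conv_rhs => rw [← congrFun hfx k, TwFE_eq p e C.toPreGraph D x k pT pS,
    Matrix.submatrix_submatrix, finCongr_comp h3 pT, Function.comp_id]

lemma fix_inv (D : DimVec C.toPreGraph) {x : RepSp p C.toPreGraph D}
    (hfx : TwFE p e C.toPreGraph D x = x) (hx : x ∈ heartSet p C D) (hbal : D.bal C)
    {k : C.E} (hk : C.isHK k)
    (pTk : D.d (C.tgt k) = D.d (C.tgt (C.aE k))) (pSk : D.d (C.src k) = D.d (C.src (C.aE k))) :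
    ((invSq (x (C.aE k))).map (frobHom p e)).submatrix (⇑(finCongr pSk)) (⇑(finCongr pTk))
      = invSq (x k) := by
  have hsq : D.d (C.tgt k) = D.d (C.src k) := d_ts C hbal hk
  have hsq' : D.d (C.tgt (C.aE k)) = D.d (C.src (C.aE k)) := d_ts C hbal (isHK_aE C hk)
  have hS' : IsUnit ((x (C.aE k)).submatrix (⇑(finCongr hsq'.symm)) id) :=
    heart_unit p C D hx (isHK_aE C hk) hsq'
  rw [invSq_eq p (x (C.aE k)) hsq', invSq_eq p (x k) hsq,
    ← Matrix.submatrix_map, ← map_nonsing_inv _ hS' (frobHom p e),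
    Matrix.submatrix_submatrix, Function.id_comp, finCongr_comp pTk hsq']
  have hSeq : ((x k).submatrix (⇑(finCongr hsq.symm)) id)
      = (((x (C.aE k)).submatrix (⇑(finCongr hsq'.symm)) id).map (frobHom p e)).submatrix
        (⇑(finCongr pSk)) (⇑(finCongr pSk)) := by
    rw [← Matrix.submatrix_map, Matrix.submatrix_submatrix, Function.id_comp,
      finCongr_comp pSk hsq'.symm]
    exact (fix_submatrix_id p e C D hfx k (pSk.trans hsq'.symm) hsq.symm pSk).symm
  rw [hSeq, inv_submatrix_equiv _ (isUnit_map _ hS' (frobHom p e)) (finCongr pSk),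
    Matrix.submatrix_submatrix, Function.comp_id, finCongr_comp hsq pSk]

lemma muE_fixed {D : DimVec C.toPreGraph} (hbal : D.bal C)
    {x : RepSp p C.toPreGraph D}
    (hfx : TwFE p e C.toPreGraph D x = x) (hx : x ∈ heartSet p C D) :
    TwFE p e C.GHat (D.hat C) (muE p C D x) = muE p C D x := by
  funext r
  rcases r with ⟨h | ⟨k, l⟩ | ⟨k, l⟩, pf⟩
  · exact congrFun hfx h
  · have hsl : C.src l = C.tgt k := pf.2
    have pf' : C.PHat (C.aERaw (Sum.inr (Sum.inl (k, l)))) := (C.pHat_aERaw _).mp pf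
    have hsl' : C.src (C.aE l) = C.tgt (C.aE k) := pf'.2
    have pT : D.d (C.tgt l) = D.d (C.tgt (C.aE l)) := by rw [C.toPreGraph.comm_tgt, D.inv]
    have pS : D.d (C.src l) = D.d (C.src (C.aE l)) := by rw [C.toPreGraph.comm_src, D.inv]
    have pSk : D.d (C.src k) = D.d (C.src (C.aE k)) := by rw [C.toPreGraph.comm_src, D.inv]
    have m : D.d (C.src l) = D.d (C.tgt k) := congrArg D.d hsl
    have m' : D.d (C.src (C.aE l)) = D.d (C.tgt (C.aE k)) := congrArg D.d hsl'
    rw [TwFE_eq p e C.GHat (D.hat C) (muE p C D x) ⟨Sum.inr (Sum.inl (k, l)), pf⟩ pT pSk]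
    have e1 : muE p C D x (C.GHat.aE ⟨Sum.inr (Sum.inl (k, l)), pf⟩)
        = x (C.aE l) * (x (C.aE k)).submatrix (⇑(finCongr m')) id := by
      show castMul (x (C.aE l)) (x (C.aE k)) = _
      exact castMul_eq p _ _ m'
    have e2 : muE p C D x ⟨Sum.inr (Sum.inl (k, l)), pf⟩
        = x l * (x k).submatrix (⇑(finCongr m)) id := by
      rw [muE_comp]
      exact castMul_eq p _ _ m
    have key : ((x (C.aE l) * (x (C.aE k)).submatrix (⇑(finCongr m')) id).map
          (frobHom p e)).submatrix (⇑(finCongr pT)) (⇑(finCongr pSk))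
        = x l * (x k).submatrix (⇑(finCongr m)) id := by
      rw [Matrix.map_mul, ← Matrix.submatrix_map,
        Matrix.submatrix_mul _ _ _ (⇑(finCongr pS)) _ (finCongr pS).bijective,
        Matrix.submatrix_submatrix, Function.id_comp, finCongr_comp pS m',
        fix_plain p e C D hfx l pT pS,
        fix_submatrix_id p e C D hfx k (pS.trans m') m pSk]
    rw [e1, e2]
    exact key
  · have htl : C.tgt l = C.tgt k := pf.2.1
    have hk : C.isHK k := pf.1
    have pf' : C.PHat (C.aERaw (Sum.inr (Sum.inr (k, l)))) := (C.pHat_aERaw _).mp pf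
    have htl' : C.tgt (C.aE l) = C.tgt (C.aE k) := pf'.2.1
    have pTk : D.d (C.tgt k) = D.d (C.tgt (C.aE k)) := by rw [C.toPreGraph.comm_tgt, D.inv]
    have pSk : D.d (C.src k) = D.d (C.src (C.aE k)) := by rw [C.toPreGraph.comm_src, D.inv]
    have pSl : D.d (C.src l) = D.d (C.src (C.aE l)) := by rw [C.toPreGraph.comm_src, D.inv]
    have mm : D.d (C.tgt k) = D.d (C.tgt l) := congrArg D.d htl.symm
    have mm' : D.d (C.tgt (C.aE k)) = D.d (C.tgt (C.aE l)) := congrArg D.d htl'.symm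
    rw [TwFE_eq p e C.GHat (D.hat C) (muE p C D x) ⟨Sum.inr (Sum.inr (k, l)), pf⟩ pSk pSl]
    have e1 : muE p C D x (C.GHat.aE ⟨Sum.inr (Sum.inr (k, l)), pf⟩)
        = invSq (x (C.aE k)) * (x (C.aE l)).submatrix (⇑(finCongr mm')) id := by
      show castMul (invSq (x (C.aE k))) (x (C.aE l)) = _
      exact castMul_eq p _ _ mm'
    have e2 : muE p C D x ⟨Sum.inr (Sum.inr (k, l)), pf⟩
        = invSq (x k) * (x l).submatrix (⇑(finCongr mm)) id := by
      rw [muE_icomp]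
      exact castMul_eq p _ _ mm
    have key : ((invSq (x (C.aE k)) * (x (C.aE l)).submatrix (⇑(finCongr mm')) id).map
          (frobHom p e)).submatrix (⇑(finCongr pSk)) (⇑(finCongr pSl))
        = invSq (x k) * (x l).submatrix (⇑(finCongr mm)) id := by
      rw [Matrix.map_mul, ← Matrix.submatrix_map,
        Matrix.submatrix_mul _ _ _ (⇑(finCongr pTk)) _ (finCongr pTk).bijective,
        Matrix.submatrix_submatrix, Function.id_comp, finCongr_comp pTk mm',
        fix_inv p e C D hfx hx hbal hk pTk pSk,
        fix_submatrix_id p e C D hfx l (pTk.trans mm') mm pSl]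
    rw [e1, e2]
    exact key

end AuxMuE2


section AuxMuE3

open Matrix

variable {F : Type*} [Field F]

lemma submatrix_col_mul {l pp m n : Type*} [Fintype m] [Fintype n]
    (M : Matrix l m F) (N : Matrix n pp F) (f : n ≃ m) :
    M.submatrix id ⇑f * N = M * N.submatrix ⇑f.symm id := by
  have h1 : N = (N.submatrix ⇑f.symm id).submatrix ⇑f id := by
    rw [Matrix.submatrix_submatrix, Equiv.symm_comp_self, Function.comp_id,
      Matrix.submatrix_id_id]
  conv_lhs => rw [h1]
  rw [Matrix.submatrix_mul_equiv M _ id f id, Matrix.submatrix_id_id]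

variable (p e : ℕ) [Fact p.Prime] (C : CSetup)

set_option maxHeartbeats 1000000 in
lemma invSq_act {D : DimVec C.toPreGraph} (hbal : D.bal C) (g : GGr p C.toPreGraph D)
    {x : RepSp p C.toPreGraph D} (hx : x ∈ heartSet p C D) {k : C.E} (hk : C.isHK k) :
    invSq (actE p C.toPreGraph D g x k)
      = (g (C.src k)).val * (invSq (x k) * ((g (C.tgt k))⁻¹).val) := by
  have hsq : D.d (C.tgt k) = D.d (C.src k) := d_ts C hbal hk
  have hdetA : IsUnit ((g (C.tgt k)).val).det :=
    (Matrix.isUnit_iff_isUnit_det _).mp (g (C.tgt k)).isUnit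
  have hdetSrc : IsUnit ((g (C.src k)).val).det :=
    (Matrix.isUnit_iff_isUnit_det _).mp (g (C.src k)).isUnit
  have hT : (actE p C.toPreGraph D g x k).submatrix (⇑(finCongr hsq.symm)) id
      = ((g (C.tgt k)).val).submatrix (⇑(finCongr hsq.symm)) (⇑(finCongr hsq.symm))
        * ((x k).submatrix (⇑(finCongr hsq.symm)) id * ((g (C.src k))⁻¹).val) := by
    rw [actE_apply, Matrix.mul_assoc,
      Matrix.submatrix_mul _ _ _ (⇑(finCongr hsq.symm)) id (finCongr hsq.symm).bijective,
      mul_submatrix_row]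
  have hBinv : (((g (C.src k))⁻¹).val)⁻¹ = (g (C.src k)).val := by
    rw [Matrix.coe_units_inv, Matrix.nonsing_inv_nonsing_inv _ hdetSrc]
  have hAinv : ((((g (C.tgt k)).val).submatrix (⇑(finCongr hsq.symm)) (⇑(finCongr hsq.symm))))⁻¹
      = (((g (C.tgt k)).val)⁻¹).submatrix (⇑(finCongr hsq.symm)) (⇑(finCongr hsq.symm)) :=
    inv_submatrix_equiv _ (g (C.tgt k)).isUnit (finCongr hsq.symm)
  have hid2 : ⇑(finCongr (hsq.trans hsq.symm)) = (id : Fin (D.d (C.tgt k)) → Fin (D.d (C.tgt k))) :=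
    funext fun i => Fin.ext rfl
  rw [invSq_eq p _ hsq, invSq_eq p _ hsq, hT, Matrix.mul_inv_rev, Matrix.mul_inv_rev,
    hBinv, hAinv, mul_submatrix_col, Matrix.submatrix_submatrix, Function.comp_id,
    finCongr_comp hsq hsq.symm, hid2, Matrix.coe_units_inv (g (C.tgt k)),
    submatrix_col_mul _ _ (finCongr hsq), finCongr_symm, Matrix.mul_assoc]


set_option maxHeartbeats 1000000 in
lemma muE_act {D : DimVec C.toPreGraph} (hbal : D.bal C) (g : GGr p C.toPreGraph D)
    {x : RepSp p C.toPreGraph D} (hx : x ∈ heartSet p C D) :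
    muE p C D (actE p C.toPreGraph D g x)
      = actE p C.GHat (D.hat C) (projG p C D g) (muE p C D x) := by
  funext r
  rcases r with ⟨h | ⟨k, l⟩ | ⟨k, l⟩, pf⟩
  · rfl
  · have hsl : C.src l = C.tgt k := pf.2
    have m : D.d (C.src l) = D.d (C.tgt k) := congrArg D.d hsl
    have eL : muE p C D (actE p C.toPreGraph D g x) ⟨Sum.inr (Sum.inl (k, l)), pf⟩
        = actE p C.toPreGraph D g x l
          * (actE p C.toPreGraph D g x k).submatrix (⇑(finCongr m)) id := by
      rw [muE_comp]
      exact castMul_eq p _ _ m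
    have eR : actE p C.GHat (D.hat C) (projG p C D g) (muE p C D x)
          ⟨Sum.inr (Sum.inl (k, l)), pf⟩
        = (g (C.tgt l)).val * (show Matrix (Fin (D.d (C.tgt l))) (Fin (D.d (C.src k))) (Kp p)
            from muE p C D x ⟨Sum.inr (Sum.inl (k, l)), pf⟩)
          * ((g (C.src k))⁻¹).val := rfl
    rw [eL, eR, muE_comp, castMul_eq p _ _ m, actE_apply, actE_apply]
    have hB : ((g (C.src l))⁻¹).val
        = (((g (C.tgt k))⁻¹).val).submatrix (⇑(finCongr m)) (⇑(finCongr m)) :=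
      dep_val_congr D.d (fun v => ((g v)⁻¹).val) hsl m
    have hA' : ((g (C.tgt k))⁻¹).val * (g (C.tgt k)).val = 1 := by
      rw [← Units.val_mul, inv_mul_cancel, Units.val_one]
    simp only [Matrix.mul_assoc]
    rw [Matrix.submatrix_mul _ _ _ (⇑(finCongr m)) id (finCongr m).bijective,
      mul_submatrix_row, hB,
      ← Matrix.mul_assoc ((((g (C.tgt k))⁻¹).val).submatrix (⇑(finCongr m)) (⇑(finCongr m)))
        (((g (C.tgt k)).val).submatrix (⇑(finCongr m)) (⇑(finCongr m))) _,
      Matrix.submatrix_mul_equiv _ _ _ (finCongr m) _, hA',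
      ← Matrix.mul_assoc ((1 : Matrix (Fin (D.d (C.tgt k))) (Fin (D.d (C.tgt k))) (Kp p)).submatrix
        (⇑(finCongr m)) (⇑(finCongr m))) ((x k).submatrix (⇑(finCongr m)) id) _,
      Matrix.submatrix_mul_equiv _ _ _ (finCongr m) _, Matrix.one_mul]
  · have htl : C.tgt l = C.tgt k := pf.2.1
    have hk : C.isHK k := pf.1
    have mm : D.d (C.tgt k) = D.d (C.tgt l) := congrArg D.d htl.symm
    have mmk : D.d (C.tgt l) = D.d (C.tgt k) := congrArg D.d htl
    have eL : muE p C D (actE p C.toPreGraph D g x) ⟨Sum.inr (Sum.inr (k, l)), pf⟩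
        = invSq (actE p C.toPreGraph D g x k)
          * (actE p C.toPreGraph D g x l).submatrix (⇑(finCongr mm)) id := by
      rw [muE_icomp]
      exact castMul_eq p _ _ mm
    have eR : actE p C.GHat (D.hat C) (projG p C D g) (muE p C D x)
          ⟨Sum.inr (Sum.inr (k, l)), pf⟩
        = (g (C.src k)).val * (show Matrix (Fin (D.d (C.src k))) (Fin (D.d (C.src l))) (Kp p)
            from muE p C D x ⟨Sum.inr (Sum.inr (k, l)), pf⟩)
          * ((g (C.src l))⁻¹).val := rfl
    rw [eL, eR, muE_icomp, castMul_eq p _ _ mm, invSq_act p C hbal g hx hk, actE_apply]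
    have hAl : (g (C.tgt l)).val
        = ((g (C.tgt k)).val).submatrix (⇑(finCongr mmk)) (⇑(finCongr mmk)) :=
      dep_val_congr D.d (fun v => (g v).val) htl mmk
    have hid : ⇑(finCongr (mm.trans mmk)) = (id : Fin (D.d (C.tgt k)) → Fin (D.d (C.tgt k))) :=
      funext fun i => Fin.ext rfl
    have hAk : ((g (C.tgt k))⁻¹).val * (g (C.tgt k)).val = 1 := by
      rw [← Units.val_mul, inv_mul_cancel, Units.val_one]
    simp only [Matrix.mul_assoc]
    rw [Matrix.submatrix_mul _ _ _ (⇑(finCongr mm)) id (finCongr mm).bijective,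
      hAl, Matrix.submatrix_submatrix, finCongr_comp mm mmk, hid, Matrix.submatrix_id_id,
      ← Matrix.mul_assoc (((g (C.tgt k))⁻¹).val) ((g (C.tgt k)).val) _, hAk, Matrix.one_mul,
      mul_submatrix_row]

end AuxMuE3



section AuxDecomp

open Matrix

variable {F : Type*} [Field F]

lemma UT_of_toSum {a b : ℕ} {M : Matrix (Fin (a + b)) (Fin (a + b)) F}
    {Z : Matrix (Fin b) (Fin a) F} (h : toSum M = Matrix.fromBlocks 1 0 Z 1) : UT M := by
  refine ⟨fun i j => ?_, fun i j => ?_, fun i j => ?_⟩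
  · rw [← toSum_lr M i j, h]
    simp [Matrix.fromBlocks_apply₁₂]
  · rw [← toSum_ll M i j, h]
    simp [Matrix.fromBlocks_apply₁₁, Matrix.one_apply]
  · rw [← toSum_rr M i j, h]
    simp [Matrix.fromBlocks_apply₂₂, Matrix.one_apply]

variable (p e : ℕ) [Fact p.Prime] (Q : PreGraph) (Dt Dw : DimVec Q)

lemma uMem_conj {u : GGr p Q (Dt.add Dw)}
    (hu : uMem p e Q Dt Dw u) {s : GGr p Q Dt} {t : GGr p Q Dw}
    (hs : TwFG p e Q Dt s = s) (ht : TwFG p e Q Dw t = t) :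
    uMem p e Q Dt Dw (embedDiag s t * u * (embedDiag s t)⁻¹) := by
  rw [uMem_iff] at hu ⊢
  refine ⟨by rw [TwFG_mul, TwFG_mul, TwFG_inv, TwFG_embedDiag, hs, ht, hu.1], fun v => ?_⟩
  have hval : ((embedDiag s t * u * (embedDiag s t)⁻¹) v).val
      = (embedDiag s t v).val * (u v).val * ((embedDiag s t v)⁻¹).val := by
    rw [GGr_mul_apply, GGr_mul_apply, GGr_inv_apply, Units.val_mul, Units.val_mul]
  have hinv : ((embedDiag s t v)⁻¹).val = (glFromBlocks (s v)⁻¹ (t v)⁻¹).val := rfl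
  have hs1 : (s v).val * ((s v)⁻¹).val = 1 := by
    rw [← Units.val_mul, mul_inv_cancel, Units.val_one]
  have ht1 : (t v).val * ((t v)⁻¹).val = 1 := by
    rw [← Units.val_mul, mul_inv_cancel, Units.val_one]
  apply UT_of_toSum (Z := (t v).val * (toSum ((u v).val)).toBlocks₂₁ * ((s v)⁻¹).val)
  erw [hval, hinv, toSum_mul, toSum_mul, embedDiag_apply, toSum_glFB, toSum_glFB,
    UT_blocks (hu.2 v), Matrix.fromBlocks_multiply, Matrix.fromBlocks_multiply]
  simp only [Matrix.mul_zero, Matrix.zero_mul, Matrix.mul_one, Matrix.one_mul,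
    add_zero, zero_add, hs1, ht1]
  rfl

lemma q_decomp' {q : GGr p Q (Dt.add Dw)} (hq : qMem p e Q Dt Dw q)
    (s : GGr p Q Dt) (t : GGr p Q Dw)
    (hs : ∀ v, (s v).val = blkTT ((q v).val)) (ht : ∀ v, (t v).val = blkWW ((q v).val)) :
    uMem p e Q Dt Dw ((embedDiag s t)⁻¹ * q) := by
  have hsF : TwFG p e Q Dt s = s := TwFG_blkT_fix p e Q Dt Dw hq.1 hs
  have htF : TwFG p e Q Dw t = t := TwFG_blkW_fix p e Q Dt Dw hq.1 ht
  rw [uMem_iff]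
  refine ⟨by rw [TwFG_mul, TwFG_inv, TwFG_embedDiag, hsF, htF, hq.1], fun v => ?_⟩
  have hval : (((embedDiag s t)⁻¹ * q) v).val
      = ((embedDiag s t v)⁻¹).val * (q v).val := by
    rw [GGr_mul_apply, GGr_inv_apply, Units.val_mul]
  have hinv : ((embedDiag s t v)⁻¹).val = (glFromBlocks (s v)⁻¹ (t v)⁻¹).val := rfl
  have hs1 : ((s v)⁻¹).val * (s v).val = 1 := by
    rw [← Units.val_mul, inv_mul_cancel, Units.val_one]
  have ht1 : ((t v)⁻¹).val * (t v).val = 1 := by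
    rw [← Units.val_mul, inv_mul_cancel, Units.val_one]
  have hqv : toSum ((q v).val)
      = Matrix.fromBlocks ((s v).val) 0 ((toSum ((q v).val)).toBlocks₂₁) ((t v).val) := by
    rw [hs v, ht v]
    exact toSum_blocks _ (fun i j => hq.2 v i j)
  apply UT_of_toSum (Z := ((t v)⁻¹).val * (toSum ((q v).val)).toBlocks₂₁)
  erw [hval, hinv, toSum_mul, toSum_glFB, hqv, Matrix.fromBlocks_multiply]
  simp only [Matrix.mul_zero, Matrix.zero_mul, Matrix.mul_one, Matrix.one_mul,
    add_zero, zero_add, hs1, ht1, Matrix.toBlocks_fromBlocks₂₁]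

end AuxDecomp


section AuxAsm

open Matrix

variable (p e : ℕ) [Fact p.Prime]

lemma out_goodU (Q : PreGraph) (Dt Dw : DimVec Q) {locus : Set (RepSp p Q (Dt.add Dw))}
    (hloc : ∀ (g : GGr p Q (Dt.add Dw)) y, y ∈ locus → actE p Q (Dt.add Dw) g y ∈ locus)
    {c : Eprime p e Q Dt Dw locus} (hc : goodClU p e Q Dt Dw c) :
    goodPair p e Q Dt Dw locus (Quot.out c) := by
  obtain ⟨a, ha1, ha2⟩ := hc
  have h0 : Quot.mk (relU p e Q Dt Dw locus) a
      = Quot.mk (relU p e Q Dt Dw locus) (Quot.out c) := by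
    erw [Quot.out_eq]
    exact ha1
  obtain ⟨u, hu, hout⟩ := mkU_exact p e Q Dt Dw hloc h0 ha2
  rw [hout]
  exact goodPair_act p e Q Dt Dw hloc ha2 (uMem_qMem p e Q Dt Dw hu)

lemma out_goodQ (Q : PreGraph) (Dt Dw : DimVec Q) {locus : Set (RepSp p Q (Dt.add Dw))}
    (hloc : ∀ (g : GGr p Q (Dt.add Dw)) y, y ∈ locus → actE p Q (Dt.add Dw) g y ∈ locus)
    {c : Edouble p e Q Dt Dw locus} (hc : goodClQ p e Q Dt Dw c) :
    goodPair p e Q Dt Dw locus (Quot.out c) := by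
  obtain ⟨a, ha1, ha2⟩ := hc
  have h0 : Quot.mk (relQ p e Q Dt Dw locus) a
      = Quot.mk (relQ p e Q Dt Dw locus) (Quot.out c) := by
    erw [Quot.out_eq]
    exact ha1
  obtain ⟨u, hu, hout⟩ := mkQ_exact p e Q Dt Dw hloc h0 ha2
  rw [hout]
  exact goodPair_act p e Q Dt Dw hloc ha2 hu

lemma pTwo_mk (Q : PreGraph) (Dt Dw : DimVec Q) {locus : Set (RepSp p Q (Dt.add Dw))}
    (hloc : ∀ (g : GGr p Q (Dt.add Dw)) y, y ∈ locus → actE p Q (Dt.add Dw) g y ∈ locus)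
    {a} (ha : goodPair p e Q Dt Dw locus a) :
    pTwo p e Q Dt Dw (locus := locus) (Quot.mk (relU p e Q Dt Dw locus) a)
      = Quot.mk (relQ p e Q Dt Dw locus) a := by
  show Quot.mk (relQ p e Q Dt Dw locus)
    (Quot.out (Quot.mk (relU p e Q Dt Dw locus) a)) = _
  have h0 : Quot.mk (relU p e Q Dt Dw locus) a
      = Quot.mk (relU p e Q Dt Dw locus)
        (Quot.out (Quot.mk (relU p e Q Dt Dw locus) a)) := (Quot.out_eq _).symm
  obtain ⟨u, hu, hout⟩ := mkU_exact p e Q Dt Dw hloc h0 ha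
  rw [hout]
  exact (mkQ_sound p e Q Dt Dw ha (uMem_qMem p e Q Dt Dw hu)).symm

variable (C : CSetup) (Dt Dw : DimVec C.toPreGraph)

lemma pairProjHat_good (hbt : Dt.bal C) (hbw : Dw.bal C)
    {c} (hc : goodPair p e C.toPreGraph Dt Dw (heartSet p C (Dt.add Dw)) c) :
    goodPair p e C.GHat (Dt.hat C) (Dw.hat C) Set.univ (pairProjHat p C Dt Dw c) := by
  obtain ⟨h1, h2, h3, h4⟩ := hc
  exact ⟨projG_fixed p e C h1, muE_fixed p e C (add_bal C hbt hbw) h2 h4,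
    muE_SW p C hbt hbw h3 h4, trivial⟩

lemma pairProjHat_pAct (hbt : Dt.bal C) (hbw : Dw.bal C)
    (u : GGr p C.toPreGraph (Dt.add Dw)) {c}
    (hh : c.2 ∈ heartSet p C (Dt.add Dw)) :
    pairProjHat p C Dt Dw (pAct u c)
      = pAct (projG p C (Dt.add Dw) u) (pairProjHat p C Dt Dw c) := by
  refine Prod.ext_iff.mpr ⟨?_, ?_⟩
  · show projG p C (Dt.add Dw) (c.1 * u⁻¹)
      = projG p C (Dt.add Dw) c.1 * (projG p C (Dt.add Dw) u)⁻¹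
    rw [projG_mul, projG_inv]
  · show muE p C (Dt.add Dw) (actE p C.toPreGraph (Dt.add Dw) u c.2) = _
    exact muE_act p C (add_bal C hbt hbw) u hh

lemma muEprime_mk (hbt : Dt.bal C) (hbw : Dw.bal C) {a}
    (ha : goodPair p e C.toPreGraph Dt Dw (heartSet p C (Dt.add Dw)) a) :
    muEprime p e C Dt Dw
        (Quot.mk (relU p e C.toPreGraph Dt Dw (heartSet p C (Dt.add Dw))) a)
      = Quot.mk (relU p e C.GHat (Dt.hat C) (Dw.hat C) Set.univ)
        (pairProjHat p C Dt Dw a) := by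
  show Quot.mk _ (pairProjHat p C Dt Dw (Quot.out (Quot.mk
    (relU p e C.toPreGraph Dt Dw (heartSet p C (Dt.add Dw))) a))) = _
  have h0 : Quot.mk (relU p e C.toPreGraph Dt Dw (heartSet p C (Dt.add Dw))) a
      = Quot.mk (relU p e C.toPreGraph Dt Dw (heartSet p C (Dt.add Dw)))
        (Quot.out (Quot.mk (relU p e C.toPreGraph Dt Dw (heartSet p C (Dt.add Dw))) a)) :=
    (Quot.out_eq _).symm
  obtain ⟨u, hu, hout⟩ := mkU_exact p e C.toPreGraph Dt Dw (heart_act_closed p C Dt Dw) h0 ha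
  rw [hout, pairProjHat_pAct p C Dt Dw hbt hbw u ha.2.2.2]
  exact (mkU_sound p e C.GHat (Dt.hat C) (Dw.hat C)
    (pairProjHat_good p e C Dt Dw hbt hbw ha) (projG_uMem p e C hu)).symm

lemma muEdouble_mk (hbt : Dt.bal C) (hbw : Dw.bal C) {a}
    (ha : goodPair p e C.toPreGraph Dt Dw (heartSet p C (Dt.add Dw)) a) :
    muEdouble p e C Dt Dw
        (Quot.mk (relQ p e C.toPreGraph Dt Dw (heartSet p C (Dt.add Dw))) a)
      = Quot.mk (relQ p e C.GHat (Dt.hat C) (Dw.hat C) Set.univ)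
        (pairProjHat p C Dt Dw a) := by
  show Quot.mk _ (pairProjHat p C Dt Dw (Quot.out (Quot.mk
    (relQ p e C.toPreGraph Dt Dw (heartSet p C (Dt.add Dw))) a))) = _
  have h0 : Quot.mk (relQ p e C.toPreGraph Dt Dw (heartSet p C (Dt.add Dw))) a
      = Quot.mk (relQ p e C.toPreGraph Dt Dw (heartSet p C (Dt.add Dw)))
        (Quot.out (Quot.mk (relQ p e C.toPreGraph Dt Dw (heartSet p C (Dt.add Dw))) a)) :=
    (Quot.out_eq _).symm
  obtain ⟨u, hu, hout⟩ := mkQ_exact p e C.toPreGraph Dt Dw (heart_act_closed p C Dt Dw) h0 ha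
  rw [hout, pairProjHat_pAct p C Dt Dw hbt hbw u ha.2.2.2]
  exact (mkQ_sound p e C.GHat (Dt.hat C) (Dw.hat C)
    (pairProjHat_good p e C Dt Dw hbt hbw ha) (projG_qMem p e C hu)).symm

end AuxAsm

section Stmt10

variable (p e : ℕ) [Fact p.Prime] (C : CSetup) (Dt Dw : DimVec C.toPreGraph)

/-- The heart locus of the total representation space, `ν = τ + ω`. -/
def hLoc : Set (RepSp p C.toPreGraph (Dt.add Dw)) := heartSet p C (Dt.add Dw)

/-- Membership in the group `G_𝐓^{[i₋],𝐅} × G_𝐖^{[i₋],𝐅}`. -/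
def stMem (st : GGr p C.toPreGraph Dt × GGr p C.toPreGraph Dw) : Prop :=
  TwFG p e C.toPreGraph Dt st.1 = st.1 ∧ TwFG p e C.toPreGraph Dw st.2 = st.2 ∧
    ∀ v, ¬ inOrbit C.aV C.im v → st.1 v = 1 ∧ st.2 v = 1

/-- The action of `G_𝐓^{[i₋],𝐅} × G_𝐖^{[i₋],𝐅}` on `𝐄′^{♥,𝐅}` through the block
diagonal embedding `G_𝐓 × G_𝐖 → G_𝐕`: `(s,t)·[g,x]_U = [g γ^{-1}, γ·x]_U`,
`γ = diag(s,t)`. -/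
def bundAct (st : GGr p C.toPreGraph Dt × GGr p C.toPreGraph Dw)
    (c : Eprime p e C.toPreGraph Dt Dw (hLoc p C Dt Dw)) :
    Eprime p e C.toPreGraph Dt Dw (hLoc p C Dt Dw) :=
  Quot.mk _ ((Quot.out c).1 * (embedDiag st.1 st.2)⁻¹,
    actE p C.toPreGraph (Dt.add Dw) (embedDiag st.1 st.2) (Quot.out c).2)


lemma liftG_qMem {qh : GGr p C.GHat ((Dt.hat C).add (Dw.hat C))}
    (hqh : qMem p e C.GHat (Dt.hat C) (Dw.hat C) qh) :
    qMem p e C.toPreGraph Dt Dw (liftG p C (Dt.add Dw) qh) := by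
  refine ⟨liftG_fixed p e C (Dt.add Dw) hqh.1, fun v i j => ?_⟩
  by_cases h : inOrbit C.aV C.im v
  · have e1 : liftG p C (Dt.add Dw) qh v = 1 := dif_pos h
    rw [e1, Units.val_one]
    exact URZ_one i j
  · have e1 : liftG p C (Dt.add Dw) qh v = qh ⟨v, h⟩ := dif_neg h
    rw [e1]
    exact hqh.2 ⟨v, h⟩ i j

lemma exists_st_decomp {q : GGr p C.toPreGraph (Dt.add Dw)}
    (hq : qMem p e C.toPreGraph Dt Dw q)
    (hqhat : uMem p e C.GHat (Dt.hat C) (Dw.hat C) (projG p C (Dt.add Dw) q)) :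
    ∃ st : GGr p C.toPreGraph Dt × GGr p C.toPreGraph Dw,
      stMem p e C Dt Dw st ∧ ∃ u, uMem p e C.toPreGraph Dt Dw u
        ∧ q = embedDiag st.1 st.2 * u := by
  have hs0 : ∀ v, IsUnit (blkTT ((q v).val)) :=
    fun v => (isUnit_blkTT (q v).isUnit (fun i j => hq.2 v i j)).1
  have ht0 : ∀ v, IsUnit (blkWW ((q v).val)) :=
    fun v => (isUnit_blkTT (q v).isUnit (fun i j => hq.2 v i j)).2
  set s : GGr p C.toPreGraph Dt := fun v => (hs0 v).unit with hsdef
  set t : GGr p C.toPreGraph Dw := fun v => (ht0 v).unit with htdef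
  have hs : ∀ v, (s v).val = blkTT ((q v).val) := fun v => (hs0 v).unit_spec
  have ht : ∀ v, (t v).val = blkWW ((q v).val) := fun v => (ht0 v).unit_spec
  have hu : uMem p e C.toPreGraph Dt Dw ((embedDiag s t)⁻¹ * q) :=
    q_decomp' p e C.toPreGraph Dt Dw hq s t hs ht
  refine ⟨(s, t), ⟨TwFG_blkT_fix p e C.toPreGraph Dt Dw hq.1 hs,
    TwFG_blkW_fix p e C.toPreGraph Dt Dw hq.1 ht, fun v hv => ?_⟩,
    (embedDiag s t)⁻¹ * q, hu, by rw [mul_inv_cancel_left]⟩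
  constructor
  · apply Units.ext
    ext i j
    rw [Units.val_one]
    have e1 : (s v).val i j = (q v).val (Fin.castAdd (Dw.d v) i) (Fin.castAdd (Dw.d v) j) := by
      rw [hs v]
      rfl
    rw [e1, (show (q v).val (Fin.castAdd (Dw.d v) i) (Fin.castAdd (Dw.d v) j)
        = if i = j then 1 else 0 from (hqhat.2 ⟨v, hv⟩).1 i j), Matrix.one_apply]
  · apply Units.ext
    ext i j
    rw [Units.val_one]
    have e1 : (t v).val i j = (q v).val (Fin.natAdd (Dt.d v) i) (Fin.natAdd (Dt.d v) j) := by
      rw [ht v]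
      rfl
    rw [e1, (show (q v).val (Fin.natAdd (Dt.d v) i) (Fin.natAdd (Dt.d v) j)
        = if i = j then 1 else 0 from (hqhat.2 ⟨v, hv⟩).2.2 i j), Matrix.one_apply]

/-- Let `Cfp` be the fiber product of `𝐄″^{♥,𝐅}` and `𝐄̂′^{𝐅̂}` over
`𝐄̂″^{𝐅̂}` (with respect to `μ″_ν` and `p̂₂`).  Then the maps `p′ : 𝐄′^{♥,𝐅} → Cfp`,
`p′ = (p₂^♥, μ′_ν)`, `p̂ = pr₁ : Cfp → 𝐄″^{♥,𝐅}` and `μ̂ = pr₂ : Cfp → 𝐄̂′^{𝐅̂}` make the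
middle square of the extended induction diagram factor commutatively (`p̂ ∘ p′ = p₂^♥` and
`μ̂ ∘ p′ = μ′_ν`), and `p′` is a principal `G_𝐓^{[i₋],𝐅} × G_𝐖^{[i₋],𝐅}`-bundle: `p′` is
surjective onto `Cfp` and each of its fibers is a single free orbit of
`G_𝐓^{[i₋],𝐅} × G_𝐖^{[i₋],𝐅}`. -/
theorem stmt10 (he : 0 < e) (hbt : Dt.bal C) (hbw : Dw.bal C)
    (Cfp : Set (Edouble p e C.toPreGraph Dt Dw (hLoc p C Dt Dw) ×
      Eprime p e C.GHat (Dt.hat C) (Dw.hat C) Set.univ))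
    (hCfp : Cfp = {dc |
      goodClQ p e C.toPreGraph Dt Dw (locus := hLoc p C Dt Dw) dc.1 ∧
      goodClU p e C.GHat (Dt.hat C) (Dw.hat C) (locus := Set.univ) dc.2 ∧
      muEdouble p e C Dt Dw dc.1 = pTwo p e C.GHat (Dt.hat C) (Dw.hat C) dc.2})
    (p' : Eprime p e C.toPreGraph Dt Dw (hLoc p C Dt Dw) →
      Edouble p e C.toPreGraph Dt Dw (hLoc p C Dt Dw) ×
        Eprime p e C.GHat (Dt.hat C) (Dw.hat C) Set.univ)
    (hp' : p' = fun c => (pTwo p e C.toPreGraph Dt Dw c, muEprime p e C Dt Dw c)) :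
    -- the factorization `p̂ ∘ p′ = p₂^♥`, `μ̂ ∘ p′ = μ′_ν`
    (∀ c, (p' c).1 = pTwo p e C.toPreGraph Dt Dw c ∧
      (p' c).2 = muEprime p e C Dt Dw c) ∧
    -- `p′` lands in the fiber product and is surjective onto it
    Set.MapsTo p' {c | goodClU p e C.toPreGraph Dt Dw (locus := hLoc p C Dt Dw) c} Cfp ∧
    (∀ dc ∈ Cfp, ∃ c, goodClU p e C.toPreGraph Dt Dw (locus := hLoc p C Dt Dw) c ∧
      p' c = dc) ∧
    -- the group acts on `𝐄′^{♥,𝐅}` preserving the fibers of `p′`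
    (∀ st, stMem p e C Dt Dw st →
      ∀ c, goodClU p e C.toPreGraph Dt Dw (locus := hLoc p C Dt Dw) c →
        goodClU p e C.toPreGraph Dt Dw (locus := hLoc p C Dt Dw)
            (bundAct p e C Dt Dw st c) ∧
        p' (bundAct p e C Dt Dw st c) = p' c) ∧
    -- each fiber of `p′` is a single orbit
    (∀ c d, goodClU p e C.toPreGraph Dt Dw (locus := hLoc p C Dt Dw) c →
      goodClU p e C.toPreGraph Dt Dw (locus := hLoc p C Dt Dw) d →
      p' c = p' d →
        ∃ st, stMem p e C Dt Dw st ∧ bundAct p e C Dt Dw st c = d) ∧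
    -- the action is free
    (∀ st, stMem p e C Dt Dw st →
      ∀ c, goodClU p e C.toPreGraph Dt Dw (locus := hLoc p C Dt Dw) c →
        bundAct p e C Dt Dw st c = c → st.1 = 1 ∧ st.2 = 1) := by
  subst hp'
  subst hCfp
  have hloc := heart_act_closed p C Dt Dw
  have hlocU := univ_act_closed p C.GHat ((Dt.hat C).add (Dw.hat C))
  refine ⟨fun c => ⟨rfl, rfl⟩, ?_, ?_, ?_, ?_, ?_⟩
  · -- maps into the fiber product
    intro c hc
    have hgood : goodPair p e C.toPreGraph Dt Dw (hLoc p C Dt Dw) (Quot.out c) :=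
      out_goodU p e C.toPreGraph Dt Dw hloc hc
    refine ⟨⟨Quot.out c, rfl, hgood⟩,
      ⟨pairProjHat p C Dt Dw (Quot.out c), rfl,
        pairProjHat_good p e C Dt Dw hbt hbw hgood⟩, ?_⟩
    exact (muEdouble_mk p e C Dt Dw hbt hbw hgood).trans
      (pTwo_mk p e C.GHat (Dt.hat C) (Dw.hat C) hlocU
        (pairProjHat_good p e C Dt Dw hbt hbw hgood)).symm
  · -- surjectivity onto the fiber product
    intro dc hdc
    obtain ⟨hdc1, hdc2, hdc3⟩ := hdc
    have ha' := out_goodQ p e C.toPreGraph Dt Dw hloc hdc1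
    have h0 : Quot.mk (relQ p e C.GHat (Dt.hat C) (Dw.hat C) Set.univ)
        (pairProjHat p C Dt Dw (Quot.out dc.1))
        = Quot.mk (relQ p e C.GHat (Dt.hat C) (Dw.hat C) Set.univ) (Quot.out dc.2) := by
      exact hdc3
    obtain ⟨qh, hqh, houth⟩ := mkQ_exact p e C.GHat (Dt.hat C) (Dw.hat C) hlocU h0
      (pairProjHat_good p e C Dt Dw hbt hbw ha')
    have hq : qMem p e C.toPreGraph Dt Dw (liftG p C (Dt.add Dw) qh) :=
      liftG_qMem p e C Dt Dw hqh
    have hp0 : goodPair p e C.toPreGraph Dt Dw (hLoc p C Dt Dw)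
        (pAct (liftG p C (Dt.add Dw) qh) (Quot.out dc.1)) :=
      goodPair_act p e C.toPreGraph Dt Dw hloc ha' hq
    refine ⟨Quot.mk _ (pAct (liftG p C (Dt.add Dw) qh) (Quot.out dc.1)),
      ⟨pAct (liftG p C (Dt.add Dw) qh) (Quot.out dc.1), rfl, hp0⟩, ?_⟩
    apply Prod.ext_iff.mpr
    constructor
    · exact ((pTwo_mk p e C.toPreGraph Dt Dw hloc hp0).trans
        (mkQ_sound p e C.toPreGraph Dt Dw ha' hq).symm).trans (Quot.out_eq dc.1)
    · refine (muEprime_mk p e C Dt Dw hbt hbw hp0).trans ?_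
      erw [pairProjHat_pAct p C Dt Dw hbt hbw _ ha'.2.2.2,
        liftG_proj p C (Dt.add Dw) qh, ← houth]
      exact Quot.out_eq dc.2
  · -- the action preserves the fibers
    intro st hst c hc
    have hgood := out_goodU p e C.toPreGraph Dt Dw hloc hc
    have hγq : qMem p e C.toPreGraph Dt Dw (embedDiag st.1 st.2) :=
      embedDiag_qMem p e C.toPreGraph Dt Dw hst.1 hst.2.1
    have hp1 : goodPair p e C.toPreGraph Dt Dw (hLoc p C Dt Dw)
        (pAct (embedDiag st.1 st.2) (Quot.out c)) :=
      goodPair_act p e C.toPreGraph Dt Dw hloc hgood hγq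
    constructor
    · exact ⟨pAct (embedDiag st.1 st.2) (Quot.out c), rfl, hp1⟩
    · apply Prod.ext_iff.mpr
      constructor
      · exact (pTwo_mk p e C.toPreGraph Dt Dw hloc hp1).trans
          (mkQ_sound p e C.toPreGraph Dt Dw hgood hγq).symm
      · have hproj1 : projG p C (Dt.add Dw) (embedDiag st.1 st.2) = 1 := by
          funext v
          show embedDiag st.1 st.2 v.1 = 1
          rw [embedDiag_apply, (hst.2.2 v.1 v.2).1, (hst.2.2 v.1 v.2).2]
          exact glFB_one p
        refine (muEprime_mk p e C Dt Dw hbt hbw hp1).trans ?_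
        erw [pairProjHat_pAct p C Dt Dw hbt hbw _ hgood.2.2.2, hproj1, pAct_one]
        rfl
  · -- each fiber is a single orbit
    intro c d hc hd hcd
    have ha := out_goodU p e C.toPreGraph Dt Dw hloc hc
    have h1 : Quot.mk (relQ p e C.toPreGraph Dt Dw (hLoc p C Dt Dw)) (Quot.out c)
        = Quot.mk (relQ p e C.toPreGraph Dt Dw (hLoc p C Dt Dw)) (Quot.out d) :=
      congrArg Prod.fst hcd
    have h2 : Quot.mk (relU p e C.GHat (Dt.hat C) (Dw.hat C) Set.univ)
        (pairProjHat p C Dt Dw (Quot.out c))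
        = Quot.mk (relU p e C.GHat (Dt.hat C) (Dw.hat C) Set.univ)
          (pairProjHat p C Dt Dw (Quot.out d)) :=
      congrArg Prod.snd hcd
    obtain ⟨q, hq, hbd⟩ := mkQ_exact p e C.toPreGraph Dt Dw hloc h1 ha
    obtain ⟨uh, huh, hbd2⟩ := mkU_exact p e C.GHat (Dt.hat C) (Dw.hat C) hlocU h2
      (pairProjHat_good p e C Dt Dw hbt hbw ha)
    have h3 : pairProjHat p C Dt Dw (Quot.out d)
        = pAct (projG p C (Dt.add Dw) q) (pairProjHat p C Dt Dw (Quot.out c)) := by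
      rw [hbd]
      exact pairProjHat_pAct p C Dt Dw hbt hbw q ha.2.2.2
    have h5 : projG p C (Dt.add Dw) q = uh := by
      have h4 : pAct (projG p C (Dt.add Dw) q) (pairProjHat p C Dt Dw (Quot.out c))
          = pAct uh (pairProjHat p C Dt Dw (Quot.out c)) := by rw [← h3, hbd2]
      have h6 := congrArg Prod.fst h4
      simp only [pAct] at h6
      exact inv_injective (mul_left_cancel h6)
    obtain ⟨st, hst, u, hu, hdecomp⟩ := exists_st_decomp p e C Dt Dw hq (h5 ▸ huh)
    refine ⟨st, hst, ?_⟩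
    have hγq : qMem p e C.toPreGraph Dt Dw (embedDiag st.1 st.2) :=
      embedDiag_qMem p e C.toPreGraph Dt Dw hst.1 hst.2.1
    have hp1 : goodPair p e C.toPreGraph Dt Dw (hLoc p C Dt Dw)
        (pAct (embedDiag st.1 st.2) (Quot.out c)) :=
      goodPair_act p e C.toPreGraph Dt Dw hloc ha hγq
    have hu2 : uMem p e C.toPreGraph Dt Dw
        (embedDiag st.1 st.2 * u * (embedDiag st.1 st.2)⁻¹) :=
      uMem_conj p e C.toPreGraph Dt Dw hu hst.1 hst.2.1
    have h7 : pAct (embedDiag st.1 st.2 * u * (embedDiag st.1 st.2)⁻¹)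
        (pAct (embedDiag st.1 st.2) (Quot.out c)) = Quot.out d := by
      rw [← pAct_mul, inv_mul_cancel_right, hbd, hdecomp]
    refine (mkU_sound p e C.toPreGraph Dt Dw hp1 hu2).trans ?_
    rw [h7]
    exact Quot.out_eq d
  · -- freeness
    intro st hst c hc hfix
    have ha := out_goodU p e C.toPreGraph Dt Dw hloc hc
    have hγq : qMem p e C.toPreGraph Dt Dw (embedDiag st.1 st.2) :=
      embedDiag_qMem p e C.toPreGraph Dt Dw hst.1 hst.2.1
    have hp1 : goodPair p e C.toPreGraph Dt Dw (hLoc p C Dt Dw)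
        (pAct (embedDiag st.1 st.2) (Quot.out c)) :=
      goodPair_act p e C.toPreGraph Dt Dw hloc ha hγq
    have h0 : Quot.mk (relU p e C.toPreGraph Dt Dw (hLoc p C Dt Dw))
        (pAct (embedDiag st.1 st.2) (Quot.out c))
        = Quot.mk (relU p e C.toPreGraph Dt Dw (hLoc p C Dt Dw)) (Quot.out c) := by
      erw [Quot.out_eq]
      exact hfix
    obtain ⟨u, hu, hout⟩ := mkU_exact p e C.toPreGraph Dt Dw hloc h0 hp1
    have h1 : Quot.out c = pAct (u * embedDiag st.1 st.2) (Quot.out c) := by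
      rw [pAct_mul]
      exact hout
    have h2 := congrArg Prod.fst h1
    simp only [pAct] at h2
    have h4 : (Quot.out c).1 * 1 = (Quot.out c).1 * (u * embedDiag st.1 st.2)⁻¹ := by
      rw [mul_one]
      exact h2
    have h5 := mul_left_cancel h4
    have h3 : u * embedDiag st.1 st.2 = 1 := by
      rw [← inv_inv (u * embedDiag st.1 st.2), ← h5, inv_one]
    have h6 : embedDiag st.1 st.2 = u⁻¹ := eq_inv_of_mul_eq_one_right h3
    have h7 : uMem p e C.toPreGraph Dt Dw (embedDiag st.1 st.2) := by
      rw [h6]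
      exact uMem_inv p e C.toPreGraph Dt Dw hu
    exact embedDiag_uMem_one p e C.toPreGraph Dt Dw h7

end Stmt10
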